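/- arXiv:2201.10767 — 5 statements merged into one kernel-verified Lean document; each statement's English description precedes it below -/
import Mathlib

section
/- Let A and B be nonempty weakly compact convex subsets of a Banach space X. If (A,B) is a sharp proximinal pair having weak proximal normal structure, then (A,B) has the weak best proximity pair property, i.e., every relatively orbital nonexpansive mapping T : A ∪ B → A ∪ B has a best proximity pair (x,y) ∈ A × B with ‖x − Tx‖ = ‖y − Ty‖ = d(A,B). -/
open Set Filter Topology

noncomputable section

variable {X : Type*} [NormedAddCommGroup X] [NormedSpace ℝ X]

/-- `d(A,B) = inf {‖x-y‖ : x ∈ A, y ∈ B}` -/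
def pairDist (A B : Set X) : ℝ := sInf {r | ∃ x ∈ A, ∃ y ∈ B, r = ‖x - y‖}

/-- `δ(x,S) = r_x(S) = sup {‖x-s‖ : s ∈ S}` -/
def ptDelta (x : X) (S : Set X) : ℝ := sSup {r | ∃ s ∈ S, r = ‖x - s‖}

/-- `δ(A,B) = sup {‖x-y‖ : x ∈ A, y ∈ B}` -/
def pairDelta (A B : Set X) : ℝ := sSup {r | ∃ x ∈ A, ∃ y ∈ B, r = ‖x - y‖}

/-- `T` is a cyclic map on `A ∪ B`. -/
def IsCyclicMap (T : X → X) (A B : Set X) : Prop := MapsTo T A B ∧ MapsTo T B A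

/-- `O²(x) = {T^{2n} x : n ∈ ℕ ∪ {0}}` -/
def orbit2 (T : X → X) (x : X) : Set X := Set.range fun n : ℕ => T^[2 * n] x

/-- `(x,y)` is a best proximity pair for `T`. -/
def IsBestProximityPair (T : X → X) (A B : Set X) (x y : X) : Prop :=
  x ∈ A ∧ y ∈ B ∧ ‖x - T x‖ = pairDist A B ∧ ‖y - T y‖ = pairDist A B

def HasBestProximityPair (T : X → X) (A B : Set X) : Prop :=
  ∃ x y, IsBestProximityPair T A B x y

/-- `(A,B)` is a proximinal pair. -/
def ProximinalPair (A B : Set X) : Prop :=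
  (∀ x ∈ A, ∃ y ∈ B, ‖x - y‖ = pairDist A B) ∧
  (∀ y ∈ B, ∃ x ∈ A, ‖x - y‖ = pairDist A B)

/-- `(A,B)` is a sharp proximinal pair. -/
def SharpProximinalPair (A B : Set X) : Prop :=
  (∀ x ∈ A, ∃! y, y ∈ B ∧ ‖x - y‖ = pairDist A B) ∧
  (∀ y ∈ B, ∃! x, x ∈ A ∧ ‖x - y‖ = pairDist A B)

/-- A set is weakly compact if it is compact in the weak topology. -/
def WeaklyCompact (A : Set X) : Prop := IsCompact (toWeakSpace ℝ X '' A)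

/-- `T` is relatively orbital nonexpansive. -/
def RelOrbitalNonexpansive (T : X → X) (A B : Set X) : Prop :=
  IsCyclicMap T A B ∧
  (∀ x ∈ A, ∀ y ∈ B, ‖x - y‖ = pairDist A B → ‖T x - T y‖ = pairDist A B) ∧
  (∀ x ∈ A, ∀ y ∈ B,
    ‖T x - T y‖ ≤ min (ptDelta x (orbit2 T y)) (ptDelta y (orbit2 T x)))

/-- `(A,B)` has weak proximal normal structure. -/
def WeakProximalNormalStructure (A B : Set X) : Prop :=
  Convex ℝ A ∧ Convex ℝ B ∧
  ∀ H1 H2 : Set X, H1.Nonempty → H2.Nonempty → H1 ⊆ A → H2 ⊆ B →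
    WeaklyCompact H1 → WeaklyCompact H2 → Convex ℝ H1 → Convex ℝ H2 →
    ProximinalPair H1 H2 → pairDist H1 H2 = pairDist A B →
    pairDist H1 H2 < pairDelta H1 H2 →
    ∃ x ∈ H1, ∃ y ∈ H2,
      ptDelta x H2 < pairDelta H1 H2 ∧ ptDelta y H1 < pairDelta H1 H2


section Aux

def toW (S : Set X) : Set (WeakSpace ℝ X) := S

def unW (p : WeakSpace ℝ X) : X := p

lemma wimg_eq (S : Set X) : toWeakSpace ℝ X '' S = toW S := by
  ext p
  constructor
  · rintro ⟨x, hx, rfl⟩; exact hx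
  · intro hp; exact ⟨unW p, hp, rfl⟩

lemma weak_eval_continuous (f : X →L[ℝ] ℝ) : Continuous fun x : WeakSpace ℝ X => f (unW x) :=
  WeakBilin.eval_continuous (topDualPairing ℝ X).flip f

instance : T2Space (WeakSpace ℝ X) := by
  apply (t2Space_iff _).2 (fun {x} {y} hxy => ?_)
  obtain ⟨f, hf⟩ :=
    SeparatingDual.exists_separating_of_ne (R := ℝ) (V := X) (x := unW x) (y := unW y) hxy
  exact separated_by_continuous (weak_eval_continuous f) hf

lemma norm_le_iff_dual (z : X) (c : ℝ) :
    ‖z‖ ≤ c ↔ ∀ f : X →L[ℝ] ℝ, ‖f‖ ≤ 1 → f z ≤ c := by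
  constructor
  · intro h f hf
    calc f z ≤ ‖f z‖ := le_abs_self _
    _ ≤ ‖f‖ * ‖z‖ := f.le_opNorm z
    _ ≤ 1 * c := mul_le_mul hf h (norm_nonneg z) zero_le_one
    _ = c := one_mul c
  · intro h
    obtain ⟨g, hg1, hgz⟩ := exists_dual_vector'' ℝ z
    have : ‖z‖ = g z := by exact_mod_cast hgz.symm
    rw [this]; exact h g hg1

/-- norm-closed convex sets are weakly closed (Mazur). -/
lemma isClosed_toW_of_convex {S : Set X} (hconv : Convex ℝ S) (hcl : IsClosed S) :
    IsClosed (toW S) := by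
  have h := Convex.toWeakSpace_closure (𝕜 := ℝ) hconv
  rw [hcl.closure_eq, wimg_eq] at h
  rw [h]
  exact isClosed_closure

lemma isClosed_toW_ball (c : X) (r : ℝ) :
    IsClosed (toW {x : X | ‖x - c‖ ≤ r}) := by
  have he : {x : X | ‖x - c‖ ≤ r} = Metric.closedBall c r := by
    ext x; simp [Metric.mem_closedBall, dist_eq_norm]
  apply isClosed_toW_of_convex
  · rw [he]; exact convex_closedBall c r
  · rw [he]; exact Metric.isClosed_closedBall

lemma weaklyCompact_iff {S : Set X} : WeaklyCompact S ↔ IsCompact (toW S) := by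
  rw [WeaklyCompact, wimg_eq]

lemma bounded_of_weaklyCompact [CompleteSpace X] {S : Set X} (hS : WeaklyCompact S) :
    ∃ M : ℝ, 0 ≤ M ∧ ∀ x ∈ S, ‖x‖ ≤ M := by
  rcases S.eq_empty_or_nonempty with rfl | hne
  · exact ⟨0, le_rfl, by simp⟩
  rw [weaklyCompact_iff] at hS
  have key : ∀ f : X →L[ℝ] ℝ,
      ∃ C, ∀ i : S, ‖(NormedSpace.inclusionInDoubleDual ℝ X (i : X)) f‖ ≤ C := by
    intro f
    have hcont : Continuous fun p : WeakSpace ℝ X => ‖f (unW p)‖ :=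
      (weak_eval_continuous f).norm
    have himg : IsCompact ((fun p : WeakSpace ℝ X => ‖f (unW p)‖) '' toW S) :=
      hS.image hcont
    obtain ⟨C, hC⟩ := himg.bddAbove
    refine ⟨C, fun i => ?_⟩
    have : ‖f (i : X)‖ ∈ (fun p : WeakSpace ℝ X => ‖f (unW p)‖) '' toW S :=
      ⟨(i : X), i.2, rfl⟩
    simpa [NormedSpace.dual_def] using hC this
  obtain ⟨C', hC'⟩ := banach_steinhaus key
  refine ⟨max C' 0, le_max_right _ _, fun x hx => ?_⟩
  have := hC' ⟨x, hx⟩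
  have hx' : ‖x‖ = ‖NormedSpace.inclusionInDoubleDual ℝ X x‖ :=
    ((NormedSpace.inclusionInDoubleDualLi ℝ (E := X)).norm_map x).symm
  rw [hx']
  exact le_trans this (le_max_left _ _)

lemma pairDist_nonneg (A B : Set X) : 0 ≤ pairDist A B := by
  apply Real.sInf_nonneg
  rintro r ⟨x, _, y, _, rfl⟩; exact norm_nonneg _

lemma pairDist_le {A B : Set X} {x y : X} (hx : x ∈ A) (hy : y ∈ B) :
    pairDist A B ≤ ‖x - y‖ := by
  apply csInf_le
  · exact ⟨0, fun r ⟨a, _, b, _, hr⟩ => hr ▸ norm_nonneg _⟩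
  · exact ⟨x, hx, y, hy, rfl⟩

lemma le_pairDist {A B : Set X} {c : ℝ} {x₀ y₀ : X} (hx₀ : x₀ ∈ A) (hy₀ : y₀ ∈ B)
    (h : ∀ x ∈ A, ∀ y ∈ B, c ≤ ‖x - y‖) : c ≤ pairDist A B := by
  apply le_csInf
  · exact ⟨‖x₀ - y₀‖, x₀, hx₀, y₀, hy₀, rfl⟩
  · rintro r ⟨x, hx, y, hy, rfl⟩; exact h x hx y hy

lemma ptDelta_le {x : X} {S : Set X} {c : ℝ} (hc : 0 ≤ c)
    (h : ∀ s ∈ S, ‖x - s‖ ≤ c) : ptDelta x S ≤ c := by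
  apply Real.sSup_le _ hc
  rintro r ⟨s, hs, rfl⟩; exact h s hs

lemma le_ptDelta {x : X} {S : Set X} {s : X} (hs : s ∈ S)
    (hbdd : ∃ M, ∀ z ∈ S, ‖z‖ ≤ M) : ‖x - s‖ ≤ ptDelta x S := by
  obtain ⟨M, hM⟩ := hbdd
  apply le_csSup
  · refine ⟨‖x‖ + M, ?_⟩
    rintro r ⟨z, hz, rfl⟩
    calc ‖x - z‖ ≤ ‖x‖ + ‖z‖ := norm_sub_le _ _
    _ ≤ ‖x‖ + M := by linarith [hM z hz]
  · exact ⟨s, hs, rfl⟩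

lemma pairDelta_le {A B : Set X} {c : ℝ} (hc : 0 ≤ c)
    (h : ∀ x ∈ A, ∀ y ∈ B, ‖x - y‖ ≤ c) : pairDelta A B ≤ c := by
  apply Real.sSup_le _ hc
  rintro r ⟨x, hx, y, hy, rfl⟩; exact h x hx y hy

lemma le_pairDelta {A B : Set X} {x y : X} (hx : x ∈ A) (hy : y ∈ B)
    (hbdd : ∃ M, (∀ z ∈ A, ‖z‖ ≤ M) ∧ ∀ z ∈ B, ‖z‖ ≤ M) :
    ‖x - y‖ ≤ pairDelta A B := by
  obtain ⟨M, hMA, hMB⟩ := hbdd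
  apply le_csSup
  · refine ⟨M + M, ?_⟩
    rintro r ⟨a, ha, b, hb, rfl⟩
    calc ‖a - b‖ ≤ ‖a‖ + ‖b‖ := norm_sub_le _ _
    _ ≤ M + M := add_le_add (hMA a ha) (hMB b hb)
  · exact ⟨x, hx, y, hy, rfl⟩

end Aux

section Aux2

/-- The family for Zorn's lemma: admissible invariant pairs. -/
def AuxF (A B : Set X) (T : X → X) (d : ℝ) (K1 K2 : Set X) : Prop :=
  K1 ⊆ A ∧ K2 ⊆ B ∧ Convex ℝ K1 ∧ Convex ℝ K2 ∧ IsCompact (toW K1) ∧ IsCompact (toW K2) ∧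
  Set.MapsTo T K1 K2 ∧ Set.MapsTo T K2 K1 ∧ ∃ p ∈ K1, ∃ q ∈ K2, ‖p - q‖ = d

variable {A B : Set X} {T : X → X} {d : ℝ}

lemma isClosed_auxZ (hd0 : 0 ≤ d) :
    IsClosed {pq : WeakSpace ℝ X × WeakSpace ℝ X | ‖unW pq.1 - unW pq.2‖ ≤ d} := by
  have hZeq : {pq : WeakSpace ℝ X × WeakSpace ℝ X | ‖unW pq.1 - unW pq.2‖ ≤ d}
      = ⋂ f : {f : X →L[ℝ] ℝ // ‖f‖ ≤ 1},
        {pq : WeakSpace ℝ X × WeakSpace ℝ X |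
          (f : X →L[ℝ] ℝ) (unW pq.1) - (f : X →L[ℝ] ℝ) (unW pq.2) ≤ d} := by
    ext pq
    simp only [Set.mem_setOf_eq, Set.mem_iInter, Subtype.forall]
    rw [norm_le_iff_dual]
    constructor
    · intro h f hf
      have := h f hf
      rwa [map_sub] at this
    · intro h f hf
      rw [map_sub]
      exact h f hf
  rw [hZeq]
  refine isClosed_iInter fun f => isClosed_le ?_ continuous_const
  exact ((weak_eval_continuous (f : X →L[ℝ] ℝ)).comp continuous_fst).sub
    ((weak_eval_continuous (f : X →L[ℝ] ℝ)).comp continuous_snd)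

lemma exists_minimal_auxF (hAB : AuxF A B T d A B) (hd : d = pairDist A B) :
    ∃ K1 K2 : Set X, AuxF A B T d K1 K2 ∧
      ∀ L1 L2 : Set X, AuxF A B T d L1 L2 → L1 ⊆ K1 → L2 ⊆ K2 → K1 ⊆ L1 ∧ K2 ⊆ L2 := by
  have hd0 : 0 ≤ d := hd ▸ pairDist_nonneg A B
  set Z : Set (WeakSpace ℝ X × WeakSpace ℝ X) :=
    {pq | ‖unW pq.1 - unW pq.2‖ ≤ d} with hZdef
  have hZc : IsClosed Z := isClosed_auxZ hd0
  set 𝒮 : Set ((Set X × Set X)ᵒᵈ) :=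
    {p | AuxF A B T d (OrderDual.ofDual p).1 (OrderDual.ofDual p).2} with h𝒮def
  have hub : ∀ c ⊆ 𝒮, IsChain (· ≤ ·) c → ∃ ub ∈ 𝒮, ∀ z ∈ c, z ≤ ub := by
    intro c hc𝒮 hchain
    rcases c.eq_empty_or_nonempty with rfl | hcne
    · exact ⟨OrderDual.toDual (A, B), hAB, by simp⟩
    -- the intersection pair
    refine ⟨OrderDual.toDual
      (⋂ p ∈ c, (OrderDual.ofDual p).1, ⋂ p ∈ c, (OrderDual.ofDual p).2), ?_, ?_⟩
    swap
    · intro z hz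
      rw [OrderDual.le_toDual]
      constructor
      · exact Set.biInter_subset_of_mem hz
      · exact Set.biInter_subset_of_mem hz
    · -- membership in 𝒮
      obtain ⟨p₀, hp₀⟩ := hcne
      have hF : ∀ p (hp : p ∈ c), AuxF A B T d (OrderDual.ofDual p).1 (OrderDual.ofDual p).2 :=
        fun p hp => hc𝒮 hp
      -- the directed family of weakly compact sets of distance-d pairs
      haveI : Nonempty c := ⟨⟨p₀, hp₀⟩⟩
      set t : c → Set (WeakSpace ℝ X × WeakSpace ℝ X) := fun p =>
        ((toW (OrderDual.ofDual p.1).1) ×ˢ (toW (OrderDual.ofDual p.1).2)) ∩ Z with htdef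
      have htc : ∀ p, IsCompact (t p) := fun p =>
        (((hF p.1 p.2).2.2.2.2.1).prod ((hF p.1 p.2).2.2.2.2.2.1)).inter_right hZc
      have htne : ∀ p, (t p).Nonempty := by
        intro p
        obtain ⟨x, hx, y, hy, hxy⟩ := (hF p.1 p.2).2.2.2.2.2.2.2.2
        exact ⟨(toWeakSpace ℝ X x, toWeakSpace ℝ X y), ⟨hx, hy⟩, by
          simp only [hZdef, Set.mem_setOf_eq]
          exact le_of_eq hxy⟩
      have htdir : Directed (· ⊇ ·) t := by
        intro i j
        rcases eq_or_ne i j with rfl | hij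
        · exact ⟨i, subset_rfl, subset_rfl⟩
        have := hchain.total i.2 j.2
        rcases this with h | h
        · -- i ≤ j in dual order: j's sets ⊆ i's sets
          refine ⟨j, ?_, subset_rfl⟩
          exact Set.inter_subset_inter_left _ (Set.prod_mono h.1 h.2)
        · refine ⟨i, subset_rfl, ?_⟩
          exact Set.inter_subset_inter_left _ (Set.prod_mono h.1 h.2)
      obtain ⟨⟨p, q⟩, hpq⟩ :=
        IsCompact.nonempty_iInter_of_directed_nonempty_isCompact_isClosed t htdir htne htc
          (fun p => (htc p).isClosed)
      simp only [Set.mem_iInter] at hpq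
      have hp1 : unW p ∈ ⋂ p' ∈ c, (OrderDual.ofDual p').1 := by
        refine Set.mem_biInter fun p' hp' => (hpq ⟨p', hp'⟩).1.1
      have hq2 : unW q ∈ ⋂ p' ∈ c, (OrderDual.ofDual p').2 := by
        refine Set.mem_biInter fun p' hp' => (hpq ⟨p', hp'⟩).1.2
      have hpqd : ‖unW p - unW q‖ = d := by
        refine le_antisymm (hpq ⟨p₀, hp₀⟩).2 ?_
        rw [hd]
        refine pairDist_le ((hF p₀ hp₀).1 ?_) ((hF p₀ hp₀).2.1 ?_)
        · exact (hpq ⟨p₀, hp₀⟩).1.1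
        · exact (hpq ⟨p₀, hp₀⟩).1.2
      refine ⟨?_, ?_, ?_, ?_, ?_, ?_, ?_, ?_, unW p, hp1, unW q, hq2, hpqd⟩
      · exact (Set.biInter_subset_of_mem hp₀).trans (hF p₀ hp₀).1
      · exact (Set.biInter_subset_of_mem hp₀).trans (hF p₀ hp₀).2.1
      · exact convex_iInter₂ fun p hp => (hF p hp).2.2.1
      · exact convex_iInter₂ fun p hp => (hF p hp).2.2.2.1
      · show IsCompact (toW (⋂ p ∈ c, (OrderDual.ofDual p).1))
        have heq : toW (⋂ p ∈ c, (OrderDual.ofDual p).1)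
            = ⋂ p : c, toW (OrderDual.ofDual p.1).1 := by
          ext x
          simp only [toW, Set.mem_iInter, Subtype.forall]
          show unW x ∈ ⋂ p ∈ c, (OrderDual.ofDual p).1 ↔ unW x ∈ (⋂ p : c, (OrderDual.ofDual p.1).1 : Set X)
          simp only [Set.mem_iInter, Subtype.forall]
        rw [heq]
        refine IsCompact.of_isClosed_subset ((hF p₀ hp₀).2.2.2.2.1)
          (isClosed_iInter fun p => ((hF p.1 p.2).2.2.2.2.1).isClosed) ?_
        exact Set.iInter_subset (fun p : c => toW (OrderDual.ofDual p.1).1) ⟨p₀, hp₀⟩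
      · show IsCompact (toW (⋂ p ∈ c, (OrderDual.ofDual p).2))
        have heq : toW (⋂ p ∈ c, (OrderDual.ofDual p).2)
            = ⋂ p : c, toW (OrderDual.ofDual p.1).2 := by
          ext x
          simp only [toW, Set.mem_iInter, Subtype.forall]
          show unW x ∈ ⋂ p ∈ c, (OrderDual.ofDual p).2 ↔ unW x ∈ (⋂ p : c, (OrderDual.ofDual p.1).2 : Set X)
          simp only [Set.mem_iInter, Subtype.forall]
        rw [heq]
        refine IsCompact.of_isClosed_subset ((hF p₀ hp₀).2.2.2.2.2.1)
          (isClosed_iInter fun p => ((hF p.1 p.2).2.2.2.2.2.1).isClosed) ?_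
        exact Set.iInter_subset (fun p : c => toW (OrderDual.ofDual p.1).2) ⟨p₀, hp₀⟩
      · show Set.MapsTo T (⋂ p ∈ c, (OrderDual.ofDual p).1) (⋂ p ∈ c, (OrderDual.ofDual p).2)
        intro x hx
        simp only [Set.mem_iInter] at hx ⊢
        exact fun p hp => (hF p hp).2.2.2.2.2.2.1 (hx p hp)
      · show Set.MapsTo T (⋂ p ∈ c, (OrderDual.ofDual p).2) (⋂ p ∈ c, (OrderDual.ofDual p).1)
        intro x hx
        simp only [Set.mem_iInter] at hx ⊢
        exact fun p hp => (hF p hp).2.2.2.2.2.2.2.1 (hx p hp)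
  obtain ⟨m, hm⟩ := zorn_le₀ 𝒮 hub
  refine ⟨(OrderDual.ofDual m).1, (OrderDual.ofDual m).2, hm.1, ?_⟩
  intro L1 L2 hL hL1 hL2
  have hle : m ≤ OrderDual.toDual (L1, L2) := by
    rw [OrderDual.le_toDual]
    exact ⟨hL1, hL2⟩
  have := hm.2 (y := OrderDual.toDual (L1, L2)) hL hle
  rw [OrderDual.toDual_le] at this
  exact this

end Aux2

/-- If `(A,B)` is a nonempty weakly compact convex sharp proximinal pair
having weak proximal normal structure in a Banach space, then every relatively orbital
nonexpansive mapping on `A ∪ B` has a best proximity pair. -/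
theorem weak_best_proximity_pair_property_of_wpns
    {X : Type*} [NormedAddCommGroup X] [NormedSpace ℝ X] [CompleteSpace X]
    (A B : Set X) (hAne : A.Nonempty) (hBne : B.Nonempty)
    (hAw : WeaklyCompact A) (hBw : WeaklyCompact B)
    (hAc : Convex ℝ A) (hBc : Convex ℝ B)
    (hsharp : SharpProximinalPair A B)
    (hwpns : WeakProximalNormalStructure A B)
    (T : X → X) (hT : RelOrbitalNonexpansive T A B) :
    HasBestProximityPair T A B := by
  classical
  obtain ⟨⟨hTAB, hTBA⟩, hrelA, hrelB⟩ := hT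
  set d := pairDist A B with hd_def
  have hd0 : 0 ≤ d := pairDist_nonneg A B
  -- a distance-d pair in (A, B)
  obtain ⟨a₀, ha₀⟩ := hAne
  obtain ⟨b₀, ⟨hb₀B, hb₀d⟩, -⟩ := hsharp.1 a₀ ha₀
  -- bounds
  obtain ⟨MA, hMA0, hMA⟩ := bounded_of_weaklyCompact hAw
  obtain ⟨MB, hMB0, hMB⟩ := bounded_of_weaklyCompact hBw
  -- the minimal admissible pair
  have hABF : AuxF A B T d A B :=
    ⟨subset_rfl, subset_rfl, hAc, hBc, weaklyCompact_iff.1 hAw, weaklyCompact_iff.1 hBw,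
      hTAB, hTBA, a₀, ha₀, b₀, hb₀B, hb₀d⟩
  obtain ⟨K1, K2, hK, hmin⟩ := exists_minimal_auxF hABF hd_def
  obtain ⟨hK1A, hK2B, hK1c, hK2c, hK1cp, hK2cp, hTK12, hTK21, p₀, hp₀, q₀, hq₀, hp₀q₀⟩ := hK
  have hK1ne : K1.Nonempty := ⟨p₀, hp₀⟩
  have hK2ne : K2.Nonempty := ⟨q₀, hq₀⟩
  have hbddK1 : ∃ M, ∀ z ∈ K1, ‖z‖ ≤ M := ⟨MA, fun z hz => hMA z (hK1A hz)⟩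
  have hbddK2 : ∃ M, ∀ z ∈ K2, ‖z‖ ≤ M := ⟨MB, fun z hz => hMB z (hK2B hz)⟩
  have hbddP : ∃ M, (∀ z ∈ K1, ‖z‖ ≤ M) ∧ ∀ z ∈ K2, ‖z‖ ≤ M :=
    ⟨max MA MB, fun z hz => (hMA z (hK1A hz)).trans (le_max_left _ _),
      fun z hz => (hMB z (hK2B hz)).trans (le_max_right _ _)⟩
  have hdle : ∀ x ∈ K1, ∀ y ∈ K2, d ≤ ‖x - y‖ :=
    fun x hx y hy => pairDist_le (hK1A hx) (hK2B hy)
  have hKd : pairDist K1 K2 = d :=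
    le_antisymm (hp₀q₀ ▸ pairDist_le hp₀ hq₀) (le_pairDist hp₀ hq₀ hdle)
  -- `ptDelta` is nonnegative on our sets
  have hpt2 : ∀ x : X, 0 ≤ ptDelta x K2 :=
    fun x => le_trans (norm_nonneg (x - q₀)) (le_ptDelta hq₀ hbddK2)
  have hpt1 : ∀ y : X, 0 ≤ ptDelta y K1 :=
    fun y => le_trans (norm_nonneg (y - p₀)) (le_ptDelta hp₀ hbddK1)
  -- the minimal pair is proximinal
  have hprox : (∀ x ∈ K1, ∃ y ∈ K2, ‖x - y‖ = d) ∧ (∀ y ∈ K2, ∃ x ∈ K1, ‖x - y‖ = d) := by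
    set Z : Set (WeakSpace ℝ X × WeakSpace ℝ X) := {pq | ‖unW pq.1 - unW pq.2‖ ≤ d} with hZdef
    have hZc : IsClosed Z := isClosed_auxZ hd0
    set K1' : Set X := {x ∈ K1 | ∃ y ∈ K2, ‖x - y‖ = d} with hK1'def
    set K2' : Set X := {y ∈ K2 | ∃ x ∈ K1, ‖x - y‖ = d} with hK2'def
    have hDcp : IsCompact ((toW K1 ×ˢ toW K2) ∩ Z) := (hK1cp.prod hK2cp).inter_right hZc
    have hF' : AuxF A B T d K1' K2' := by
      refine ⟨(Set.sep_subset _ _).trans hK1A, (Set.sep_subset _ _).trans hK2B, ?_, ?_, ?_, ?_,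
        ?_, ?_, p₀, ⟨hp₀, q₀, hq₀, hp₀q₀⟩, q₀, ⟨hq₀, p₀, hp₀, hp₀q₀⟩, hp₀q₀⟩
      · -- convexity of K1'
        rintro x1 ⟨hx1, y1, hy1, hxy1⟩ x2 ⟨hx2, y2, hy2, hxy2⟩ s t hs ht hst
        refine ⟨hK1c hx1 hx2 hs ht hst, s • y1 + t • y2, hK2c hy1 hy2 hs ht hst, ?_⟩
        refine le_antisymm ?_ (hdle _ (hK1c hx1 hx2 hs ht hst) _ (hK2c hy1 hy2 hs ht hst))
        have hcomb : (s • x1 + t • x2) - (s • y1 + t • y2)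
            = s • (x1 - y1) + t • (x2 - y2) := by module
        rw [hcomb]
        calc ‖s • (x1 - y1) + t • (x2 - y2)‖ ≤ ‖s • (x1 - y1)‖ + ‖t • (x2 - y2)‖ :=
          norm_add_le _ _
        _ = s * ‖x1 - y1‖ + t * ‖x2 - y2‖ := by
            rw [norm_smul, norm_smul, Real.norm_of_nonneg hs, Real.norm_of_nonneg ht]
        _ = d := by rw [hxy1, hxy2, ← add_mul, hst, one_mul]
      · -- convexity of K2'
        rintro y1 ⟨hy1, x1, hx1, hxy1⟩ y2 ⟨hy2, x2, hx2, hxy2⟩ s t hs ht hst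
        refine ⟨hK2c hy1 hy2 hs ht hst, s • x1 + t • x2, hK1c hx1 hx2 hs ht hst, ?_⟩
        refine le_antisymm ?_ (hdle _ (hK1c hx1 hx2 hs ht hst) _ (hK2c hy1 hy2 hs ht hst))
        have hcomb : (s • x1 + t • x2) - (s • y1 + t • y2)
            = s • (x1 - y1) + t • (x2 - y2) := by module
        rw [hcomb]
        calc ‖s • (x1 - y1) + t • (x2 - y2)‖ ≤ ‖s • (x1 - y1)‖ + ‖t • (x2 - y2)‖ :=
          norm_add_le _ _
        _ = s * ‖x1 - y1‖ + t * ‖x2 - y2‖ := by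
            rw [norm_smul, norm_smul, Real.norm_of_nonneg hs, Real.norm_of_nonneg ht]
        _ = d := by rw [hxy1, hxy2, ← add_mul, hst, one_mul]
      · -- weak compactness of K1'
        have heq : toW K1' = Prod.fst '' ((toW K1 ×ˢ toW K2) ∩ Z) := by
          ext x
          constructor
          · rintro ⟨hx, y, hy, hxy⟩
            exact ⟨(x, toWeakSpace ℝ X y), ⟨⟨hx, hy⟩, le_of_eq hxy⟩, rfl⟩
          · rintro ⟨⟨p, q⟩, ⟨⟨hp, hq⟩, hpq⟩, rfl⟩
            exact ⟨hp, unW q, hq, le_antisymm hpq (hdle _ hp _ hq)⟩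
        rw [heq]
        exact hDcp.image continuous_fst
      · -- weak compactness of K2'
        have heq : toW K2' = Prod.snd '' ((toW K1 ×ˢ toW K2) ∩ Z) := by
          ext y
          constructor
          · rintro ⟨hy, x, hx, hxy⟩
            exact ⟨(toWeakSpace ℝ X x, y), ⟨⟨hx, hy⟩, le_of_eq hxy⟩, rfl⟩
          · rintro ⟨⟨p, q⟩, ⟨⟨hp, hq⟩, hpq⟩, rfl⟩
            exact ⟨hq, unW p, hp, le_antisymm hpq (hdle _ hp _ hq)⟩
        rw [heq]
        exact hDcp.image continuous_snd
      · -- T maps K1' into K2'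
        rintro x ⟨hx, y, hy, hxy⟩
        refine ⟨hTK12 hx, T y, hTK21 hy, ?_⟩
        have := hrelA x (hK1A hx) y (hK2B hy) hxy
        rw [norm_sub_rev]
        exact this
      · -- T maps K2' into K1'
        rintro y ⟨hy, x, hx, hxy⟩
        refine ⟨hTK21 hy, T x, hTK12 hx, ?_⟩
        rw [norm_sub_rev]
        exact hrelA x (hK1A hx) y (hK2B hy) hxy
    obtain ⟨h1, h2⟩ := hmin K1' K2' hF' (Set.sep_subset _ _) (Set.sep_subset _ _)
    exact ⟨fun x hx => (h1 hx).2, fun y hy => (h2 hy).2⟩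
  obtain ⟨hprox1, hprox2⟩ := hprox
  -- minimality: K1 is the smallest weakly closed convex set containing T '' K2, and dually
  have hK1min : ∀ C : Set X, Convex ℝ C → IsClosed (toW C) → T '' K2 ⊆ C → K1 ⊆ C := by
    have key : ∀ C : Set X, C ∈ {C | T '' K2 ⊆ C ∧ C ⊆ K1 ∧ Convex ℝ C ∧ IsClosed (toW C)} →
        K1 ⊆ C := by
      set 𝒞1 : Set (Set X) := {C | T '' K2 ⊆ C ∧ C ⊆ K1 ∧ Convex ℝ C ∧ IsClosed (toW C)}
        with h𝒞1def
      set 𝒞2 : Set (Set X) := {C | T '' K1 ⊆ C ∧ C ⊆ K2 ∧ Convex ℝ C ∧ IsClosed (toW C)}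
        with h𝒞2def
      have hK1𝒞 : K1 ∈ 𝒞1 :=
        ⟨Set.mapsTo_iff_image_subset.mp hTK21, subset_rfl, hK1c, hK1cp.isClosed⟩
      have hK2𝒞 : K2 ∈ 𝒞2 :=
        ⟨Set.mapsTo_iff_image_subset.mp hTK12, subset_rfl, hK2c, hK2cp.isClosed⟩
      set N1 := ⋂₀ 𝒞1 with hN1def
      set N2 := ⋂₀ 𝒞2 with hN2def
      have hN1K1 : N1 ⊆ K1 := Set.sInter_subset_of_mem hK1𝒞
      have hN2K2 : N2 ⊆ K2 := Set.sInter_subset_of_mem hK2𝒞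
      have hTK2N1 : T '' K2 ⊆ N1 := Set.subset_sInter fun C hC => hC.1
      have hTK1N2 : T '' K1 ⊆ N2 := Set.subset_sInter fun C hC => hC.1
      have hcpN1 : IsCompact (toW N1) := by
        have heq : toW N1 = ⋂ C : 𝒞1, toW C.1 := by
          ext x
          simp only [toW, hN1def, Set.mem_sInter, Set.mem_iInter, Subtype.forall]
          show unW x ∈ ⋂₀ 𝒞1 ↔ unW x ∈ (⋂ C : 𝒞1, C.1 : Set X)
          simp only [Set.mem_sInter, Set.mem_iInter, Subtype.forall]
        rw [heq]
        refine IsCompact.of_isClosed_subset hK1cp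
          (isClosed_iInter fun C => C.2.2.2.2) ?_
        exact Set.iInter_subset (fun C : 𝒞1 => toW C.1) ⟨K1, hK1𝒞⟩
      have hcpN2 : IsCompact (toW N2) := by
        have heq : toW N2 = ⋂ C : 𝒞2, toW C.1 := by
          ext x
          simp only [toW, hN2def, Set.mem_sInter, Set.mem_iInter, Subtype.forall]
          show unW x ∈ ⋂₀ 𝒞2 ↔ unW x ∈ (⋂ C : 𝒞2, C.1 : Set X)
          simp only [Set.mem_sInter, Set.mem_iInter, Subtype.forall]
        rw [heq]
        refine IsCompact.of_isClosed_subset hK2cp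
          (isClosed_iInter fun C => C.2.2.2.2) ?_
        exact Set.iInter_subset (fun C : 𝒞2 => toW C.1) ⟨K2, hK2𝒞⟩
      have hF'' : AuxF A B T d N1 N2 := by
        refine ⟨hN1K1.trans hK1A, hN2K2.trans hK2B,
          convex_sInter fun C hC => hC.2.2.1, convex_sInter fun C hC => hC.2.2.1,
          hcpN1, hcpN2, ?_, ?_, T q₀, hTK2N1 ⟨q₀, hq₀, rfl⟩, T p₀, hTK1N2 ⟨p₀, hp₀, rfl⟩, ?_⟩
        · exact fun x hx => hTK1N2 ⟨x, hN1K1 hx, rfl⟩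
        · exact fun y hy => hTK2N1 ⟨y, hN2K2 hy, rfl⟩
        · rw [norm_sub_rev]
          exact hrelA p₀ (hK1A hp₀) q₀ (hK2B hq₀) hp₀q₀
      obtain ⟨h1, -⟩ := hmin N1 N2 hF'' hN1K1 hN2K2
      intro C hC
      exact (h1.trans (Set.sInter_subset_of_mem hC))
    intro C hCc hCcl hTC
    have : C ∩ K1 ∈ {C | T '' K2 ⊆ C ∧ C ⊆ K1 ∧ Convex ℝ C ∧ IsClosed (toW C)} := by
      refine ⟨Set.subset_inter hTC (Set.mapsTo_iff_image_subset.mp hTK21), Set.inter_subset_right,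
        hCc.inter hK1c, ?_⟩
      have : toW (C ∩ K1) = toW C ∩ toW K1 := rfl
      rw [this]
      exact hCcl.inter hK1cp.isClosed
    exact (key _ this).trans Set.inter_subset_left
  have hK2min : ∀ C : Set X, Convex ℝ C → IsClosed (toW C) → T '' K1 ⊆ C → K2 ⊆ C := by
    have key : ∀ C : Set X, C ∈ {C | T '' K1 ⊆ C ∧ C ⊆ K2 ∧ Convex ℝ C ∧ IsClosed (toW C)} →
        K2 ⊆ C := by
      set 𝒞1 : Set (Set X) := {C | T '' K2 ⊆ C ∧ C ⊆ K1 ∧ Convex ℝ C ∧ IsClosed (toW C)}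
        with h𝒞1def
      set 𝒞2 : Set (Set X) := {C | T '' K1 ⊆ C ∧ C ⊆ K2 ∧ Convex ℝ C ∧ IsClosed (toW C)}
        with h𝒞2def
      have hK1𝒞 : K1 ∈ 𝒞1 :=
        ⟨Set.mapsTo_iff_image_subset.mp hTK21, subset_rfl, hK1c, hK1cp.isClosed⟩
      have hK2𝒞 : K2 ∈ 𝒞2 :=
        ⟨Set.mapsTo_iff_image_subset.mp hTK12, subset_rfl, hK2c, hK2cp.isClosed⟩
      set N1 := ⋂₀ 𝒞1 with hN1def
      set N2 := ⋂₀ 𝒞2 with hN2def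
      have hN1K1 : N1 ⊆ K1 := Set.sInter_subset_of_mem hK1𝒞
      have hN2K2 : N2 ⊆ K2 := Set.sInter_subset_of_mem hK2𝒞
      have hTK2N1 : T '' K2 ⊆ N1 := Set.subset_sInter fun C hC => hC.1
      have hTK1N2 : T '' K1 ⊆ N2 := Set.subset_sInter fun C hC => hC.1
      have hcpN1 : IsCompact (toW N1) := by
        have heq : toW N1 = ⋂ C : 𝒞1, toW C.1 := by
          ext x
          simp only [toW, hN1def, Set.mem_sInter, Set.mem_iInter, Subtype.forall]
          show unW x ∈ ⋂₀ 𝒞1 ↔ unW x ∈ (⋂ C : 𝒞1, C.1 : Set X)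
          simp only [Set.mem_sInter, Set.mem_iInter, Subtype.forall]
        rw [heq]
        refine IsCompact.of_isClosed_subset hK1cp
          (isClosed_iInter fun C => C.2.2.2.2) ?_
        exact Set.iInter_subset (fun C : 𝒞1 => toW C.1) ⟨K1, hK1𝒞⟩
      have hcpN2 : IsCompact (toW N2) := by
        have heq : toW N2 = ⋂ C : 𝒞2, toW C.1 := by
          ext x
          simp only [toW, hN2def, Set.mem_sInter, Set.mem_iInter, Subtype.forall]
          show unW x ∈ ⋂₀ 𝒞2 ↔ unW x ∈ (⋂ C : 𝒞2, C.1 : Set X)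
          simp only [Set.mem_sInter, Set.mem_iInter, Subtype.forall]
        rw [heq]
        refine IsCompact.of_isClosed_subset hK2cp
          (isClosed_iInter fun C => C.2.2.2.2) ?_
        exact Set.iInter_subset (fun C : 𝒞2 => toW C.1) ⟨K2, hK2𝒞⟩
      have hF'' : AuxF A B T d N1 N2 := by
        refine ⟨hN1K1.trans hK1A, hN2K2.trans hK2B,
          convex_sInter fun C hC => hC.2.2.1, convex_sInter fun C hC => hC.2.2.1,
          hcpN1, hcpN2, ?_, ?_, T q₀, hTK2N1 ⟨q₀, hq₀, rfl⟩, T p₀, hTK1N2 ⟨p₀, hp₀, rfl⟩, ?_⟩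
        · exact fun x hx => hTK1N2 ⟨x, hN1K1 hx, rfl⟩
        · exact fun y hy => hTK2N1 ⟨y, hN2K2 hy, rfl⟩
        · rw [norm_sub_rev]
          exact hrelA p₀ (hK1A hp₀) q₀ (hK2B hq₀) hp₀q₀
      obtain ⟨-, h2⟩ := hmin N1 N2 hF'' hN1K1 hN2K2
      intro C hC
      exact (h2.trans (Set.sInter_subset_of_mem hC))
    intro C hCc hCcl hTC
    have : C ∩ K2 ∈ {C | T '' K1 ⊆ C ∧ C ⊆ K2 ∧ Convex ℝ C ∧ IsClosed (toW C)} := by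
      refine ⟨Set.subset_inter hTC (Set.mapsTo_iff_image_subset.mp hTK12), Set.inter_subset_right,
        hCc.inter hK2c, ?_⟩
      have : toW (C ∩ K2) = toW C ∩ toW K2 := rfl
      rw [this]
      exact hCcl.inter hK2cp.isClosed
    exact (key _ this).trans Set.inter_subset_left
  -- orbits stay in the sets
  have horb2 : ∀ y ∈ K2, ∀ n : ℕ, T^[2*n] y ∈ K2 := by
    intro y hy n
    induction n with
    | zero => simpa using hy
    | succ n ih =>
        have h1 : T^[2*(n+1)] y = T (T (T^[2*n] y)) := by
          rw [show 2*(n+1) = (2*n) + 1 + 1 by ring, Function.iterate_succ_apply',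
            Function.iterate_succ_apply']
        rw [h1]
        exact hTK12 (hTK21 ih)
  have horb1 : ∀ x ∈ K1, ∀ n : ℕ, T^[2*n] x ∈ K1 := by
    intro x hx n
    induction n with
    | zero => simpa using hx
    | succ n ih =>
        have h1 : T^[2*(n+1)] x = T (T (T^[2*n] x)) := by
          rw [show 2*(n+1) = (2*n) + 1 + 1 by ring, Function.iterate_succ_apply',
            Function.iterate_succ_apply']
        rw [h1]
        exact hTK21 (hTK12 ih)
  -- orbital nonexpansiveness estimates
  have hTbound1 : ∀ x ∈ K1, ∀ y ∈ K2, ‖T x - T y‖ ≤ ptDelta x K2 := by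
    intro x hx y hy
    calc ‖T x - T y‖ ≤ min (ptDelta x (orbit2 T y)) (ptDelta y (orbit2 T x)) :=
      hrelB x (hK1A hx) y (hK2B hy)
    _ ≤ ptDelta x (orbit2 T y) := min_le_left _ _
    _ ≤ ptDelta x K2 := by
        refine ptDelta_le (hpt2 x) ?_
        rintro s ⟨n, rfl⟩
        exact le_ptDelta (horb2 y hy n) hbddK2
  have hTbound2 : ∀ x ∈ K1, ∀ y ∈ K2, ‖T x - T y‖ ≤ ptDelta y K1 := by
    intro x hx y hy
    calc ‖T x - T y‖ ≤ min (ptDelta x (orbit2 T y)) (ptDelta y (orbit2 T x)) :=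
      hrelB x (hK1A hx) y (hK2B hy)
    _ ≤ ptDelta y (orbit2 T x) := min_le_right _ _
    _ ≤ ptDelta y K1 := by
        refine ptDelta_le (hpt1 y) ?_
        rintro s ⟨n, rfl⟩
        exact le_ptDelta (horb1 x hx n) hbddK1
  -- convexity of balls written with norms
  have hballconv : ∀ (c : X) (ρ : ℝ), Convex ℝ {z : X | ‖z - c‖ ≤ ρ} := by
    intro c ρ
    have he : {z : X | ‖z - c‖ ≤ ρ} = Metric.closedBall c ρ := by
      ext z; simp [Metric.mem_closedBall, dist_eq_norm]
    rw [he]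
    exact convex_closedBall c ρ
  -- main case split
  by_cases hcase : pairDelta K1 K2 ≤ d
  · -- diameter equals distance: any point of K1 with its image works
    refine ⟨p₀, T p₀, hK1A hp₀, hK2B (hTK12 hp₀), ?_, ?_⟩
    · refine le_antisymm ?_ (pairDist_le (hK1A hp₀) (hK2B (hTK12 hp₀)))
      exact le_trans (le_pairDelta hp₀ (hTK12 hp₀) hbddP) hcase
    · have h1 : T (T p₀) ∈ K1 := hTK21 (hTK12 hp₀)
      refine le_antisymm ?_ ?_
      · rw [norm_sub_rev]
        exact le_trans (le_pairDelta h1 (hTK12 hp₀) hbddP) hcase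
      · rw [norm_sub_rev]
        exact pairDist_le (hK1A h1) (hK2B (hTK12 hp₀))
  · push_neg at hcase
    -- apply weak proximal normal structure
    have hproxP : ProximinalPair K1 K2 := by
      constructor
      · intro x hx
        obtain ⟨y, hy, hxy⟩ := hprox1 x hx
        exact ⟨y, hy, by rw [hKd]; exact hxy⟩
      · intro y hy
        obtain ⟨x, hx, hxy⟩ := hprox2 y hy
        exact ⟨x, hx, by rw [hKd]; exact hxy⟩
    obtain ⟨u, hu, v, hv, huδ, hvδ⟩ := hwpns.2.2 K1 K2 hK1ne hK2ne hK1A hK2B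
      (weaklyCompact_iff.2 hK1cp) (weaklyCompact_iff.2 hK2cp) hK1c hK2c hproxP hKd
      (by rw [hKd]; exact hcase)
    obtain ⟨u', hu', huu'⟩ := hprox1 u hu
    obtain ⟨v', hv', hv'v⟩ := hprox2 v hv
    set δK := pairDelta K1 K2 with hδKdef
    have hδK0 : 0 ≤ δK := le_trans hd0 hcase.le
    set r := max ((ptDelta u K2 + δK)/2) ((ptDelta v K1 + δK)/2) with hrdef
    have hptu0 : 0 ≤ ptDelta u K2 := hpt2 u
    have hptv0 : 0 ≤ ptDelta v K1 := hpt1 v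
    have hr0 : 0 ≤ r := le_trans (by linarith) (le_max_left _ _)
    have hrδ : r < δK := max_lt (by linarith) (by linarith)
    have hδxK2 : ∀ x ∈ K1, ptDelta x K2 ≤ δK :=
      fun x hx => ptDelta_le hδK0 fun y hy => le_pairDelta hx hy hbddP
    have hδyK1 : ∀ y ∈ K2, ptDelta y K1 ≤ δK := by
      intro y hy
      refine ptDelta_le hδK0 fun z hz => ?_
      rw [norm_sub_rev]
      exact le_pairDelta hz hy hbddP
    -- a proximal pair of non-diametral points
    set w : X := (1/2 : ℝ) • u + (1/2 : ℝ) • v' with hwdef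
    set w' : X := (1/2 : ℝ) • u' + (1/2 : ℝ) • v with hw'def
    have hw1 : w ∈ K1 := hK1c hu hv' (by norm_num) (by norm_num) (by norm_num)
    have hw2 : w' ∈ K2 := hK2c hu' hv (by norm_num) (by norm_num) (by norm_num)
    have hww' : ‖w - w'‖ = d := by
      refine le_antisymm ?_ (hdle _ hw1 _ hw2)
      have hcomb : w - w' = (1/2 : ℝ) • (u - u') + (1/2 : ℝ) • (v' - v) := by
        rw [hwdef, hw'def]; module
      rw [hcomb]
      calc ‖(1/2 : ℝ) • (u - u') + (1/2 : ℝ) • (v' - v)‖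
          ≤ ‖(1/2 : ℝ) • (u - u')‖ + ‖(1/2 : ℝ) • (v' - v)‖ := norm_add_le _ _
      _ = (1/2) * ‖u - u'‖ + (1/2) * ‖v' - v‖ := by
          rw [norm_smul, norm_smul]; norm_num
      _ = d := by rw [huu', hv'v]; ring
    have hwpt : ptDelta w K2 ≤ r := by
      refine ptDelta_le hr0 fun y hy => ?_
      have hcomb : w - y = (1/2 : ℝ) • (u - y) + (1/2 : ℝ) • (v' - y) := by
        rw [hwdef]; module
      rw [hcomb]
      calc ‖(1/2 : ℝ) • (u - y) + (1/2 : ℝ) • (v' - y)‖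
          ≤ ‖(1/2 : ℝ) • (u - y)‖ + ‖(1/2 : ℝ) • (v' - y)‖ := norm_add_le _ _
      _ = (1/2) * ‖u - y‖ + (1/2) * ‖v' - y‖ := by
          rw [norm_smul, norm_smul]; norm_num
      _ ≤ (1/2) * ptDelta u K2 + (1/2) * δK := by
          have h1 : ‖u - y‖ ≤ ptDelta u K2 := le_ptDelta hy hbddK2
          have h2 : ‖v' - y‖ ≤ ptDelta v' K2 := le_ptDelta hy hbddK2
          have h3 : ptDelta v' K2 ≤ δK := hδxK2 v' hv'
          linarith
      _ ≤ r := le_trans (by linarith) (le_max_left _ _)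
    have hw'pt : ptDelta w' K1 ≤ r := by
      refine ptDelta_le hr0 fun z hz => ?_
      have hcomb : w' - z = (1/2 : ℝ) • (u' - z) + (1/2 : ℝ) • (v - z) := by
        rw [hw'def]; module
      rw [hcomb]
      calc ‖(1/2 : ℝ) • (u' - z) + (1/2 : ℝ) • (v - z)‖
          ≤ ‖(1/2 : ℝ) • (u' - z)‖ + ‖(1/2 : ℝ) • (v - z)‖ := norm_add_le _ _
      _ = (1/2) * ‖u' - z‖ + (1/2) * ‖v - z‖ := by
          rw [norm_smul, norm_smul]; norm_num
      _ ≤ (1/2) * δK + (1/2) * ptDelta v K1 := by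
          have h1 : ‖u' - z‖ ≤ ptDelta u' K1 := le_ptDelta hz hbddK1
          have h3 : ptDelta u' K1 ≤ δK := hδyK1 u' hu'
          have h2 : ‖v - z‖ ≤ ptDelta v K1 := le_ptDelta hz hbddK1
          linarith
      _ ≤ r := le_trans (by linarith) (le_max_right _ _)
    -- the contradiction pair
    set L1 : Set X := {x ∈ K1 | ptDelta x K2 ≤ r} with hL1def
    set L2 : Set X := {y ∈ K2 | ptDelta y K1 ≤ r} with hL2def
    have hL : AuxF A B T d L1 L2 := by
      refine ⟨(Set.sep_subset _ _).trans hK1A, (Set.sep_subset _ _).trans hK2B, ?_, ?_, ?_, ?_,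
        ?_, ?_, w, ⟨hw1, hwpt⟩, w', ⟨hw2, hw'pt⟩, hww'⟩
      · -- convexity of L1
        rintro x1 ⟨hx1, hp1⟩ x2 ⟨hx2, hp2⟩ s t hs ht hst
        refine ⟨hK1c hx1 hx2 hs ht hst, ptDelta_le hr0 fun y hy => ?_⟩
        have hcomb : (s • x1 + t • x2) - y = s • (x1 - y) + t • (x2 - y) := by
          calc (s • x1 + t • x2) - y = (s • x1 + t • x2) - (s+t) • y := by rw [hst, one_smul]
          _ = s • (x1 - y) + t • (x2 - y) := by module
        rw [hcomb]
        calc ‖s • (x1 - y) + t • (x2 - y)‖ ≤ s * ‖x1 - y‖ + t * ‖x2 - y‖ := by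
              refine le_trans (norm_add_le _ _) ?_
              rw [norm_smul, norm_smul, Real.norm_of_nonneg hs, Real.norm_of_nonneg ht]
        _ ≤ s * r + t * r := by
              have h1 : ‖x1 - y‖ ≤ r := le_trans (le_ptDelta hy hbddK2) hp1
              have h2 : ‖x2 - y‖ ≤ r := le_trans (le_ptDelta hy hbddK2) hp2
              exact add_le_add (mul_le_mul_of_nonneg_left h1 hs) (mul_le_mul_of_nonneg_left h2 ht)
        _ = r := by rw [← add_mul, hst, one_mul]
      · -- convexity of L2
        rintro y1 ⟨hy1, hp1⟩ y2 ⟨hy2, hp2⟩ s t hs ht hst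
        refine ⟨hK2c hy1 hy2 hs ht hst, ptDelta_le hr0 fun z hz => ?_⟩
        have hcomb : (s • y1 + t • y2) - z = s • (y1 - z) + t • (y2 - z) := by
          calc (s • y1 + t • y2) - z = (s • y1 + t • y2) - (s+t) • z := by rw [hst, one_smul]
          _ = s • (y1 - z) + t • (y2 - z) := by module
        rw [hcomb]
        calc ‖s • (y1 - z) + t • (y2 - z)‖ ≤ s * ‖y1 - z‖ + t * ‖y2 - z‖ := by
              refine le_trans (norm_add_le _ _) ?_
              rw [norm_smul, norm_smul, Real.norm_of_nonneg hs, Real.norm_of_nonneg ht]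
        _ ≤ s * r + t * r := by
              have h1 : ‖y1 - z‖ ≤ r := le_trans (le_ptDelta hz hbddK1) hp1
              have h2 : ‖y2 - z‖ ≤ r := le_trans (le_ptDelta hz hbddK1) hp2
              exact add_le_add (mul_le_mul_of_nonneg_left h1 hs) (mul_le_mul_of_nonneg_left h2 ht)
        _ = r := by rw [← add_mul, hst, one_mul]
      · -- weak compactness of L1
        have heq : toW L1 = toW K1 ∩ ⋂ y : K2, toW {x : X | ‖x - (y : X)‖ ≤ r} := by
          ext x
          constructor
          · rintro ⟨hx, hpt⟩
            refine ⟨hx, Set.mem_iInter.2 fun y => le_trans (le_ptDelta y.2 hbddK2) hpt⟩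
          · rintro ⟨hx, hmem⟩
            rw [Set.mem_iInter] at hmem
            exact ⟨hx, ptDelta_le hr0 fun y hy => hmem ⟨y, hy⟩⟩
        rw [heq]
        refine IsCompact.of_isClosed_subset hK1cp
          (IsClosed.inter hK1cp.isClosed (isClosed_iInter fun y => isClosed_toW_ball _ r))
          Set.inter_subset_left
      · -- weak compactness of L2
        have heq : toW L2 = toW K2 ∩ ⋂ z : K1, toW {y : X | ‖y - (z : X)‖ ≤ r} := by
          ext y
          constructor
          · rintro ⟨hy, hpt⟩
            refine ⟨hy, Set.mem_iInter.2 fun z => le_trans (le_ptDelta z.2 hbddK1) hpt⟩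
          · rintro ⟨hy, hmem⟩
            rw [Set.mem_iInter] at hmem
            exact ⟨hy, ptDelta_le hr0 fun z hz => hmem ⟨z, hz⟩⟩
        rw [heq]
        refine IsCompact.of_isClosed_subset hK2cp
          (IsClosed.inter hK2cp.isClosed (isClosed_iInter fun z => isClosed_toW_ball _ r))
          Set.inter_subset_left
      · -- T maps L1 into L2
        rintro x ⟨hx, hxpt⟩
        refine ⟨hTK12 hx, ptDelta_le hr0 fun z hz => ?_⟩
        have hsub : K1 ⊆ {z : X | ‖z - T x‖ ≤ r} := by
          refine hK1min _ (hballconv _ _) (isClosed_toW_ball _ r) ?_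
          rintro - ⟨y, hy, rfl⟩
          show ‖T y - T x‖ ≤ r
          rw [norm_sub_rev]
          exact le_trans (hTbound1 x hx y hy) hxpt
        rw [norm_sub_rev]
        exact hsub hz
      · -- T maps L2 into L1
        rintro y ⟨hy, hypt⟩
        refine ⟨hTK21 hy, ptDelta_le hr0 fun z hz => ?_⟩
        have hsub : K2 ⊆ {z : X | ‖z - T y‖ ≤ r} := by
          refine hK2min _ (hballconv _ _) (isClosed_toW_ball _ r) ?_
          rintro - ⟨x, hx, rfl⟩
          show ‖T x - T y‖ ≤ r
          exact le_trans (hTbound2 x hx y hy) hypt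
        rw [norm_sub_rev]
        exact hsub hz
    obtain ⟨h1, -⟩ := hmin L1 L2 hL (Set.sep_subset _ _) (Set.sep_subset _ _)
    exfalso
    have : δK ≤ r := by
      refine pairDelta_le hr0 fun x hx y hy => ?_
      exact le_trans (le_ptDelta hy hbddK2) (h1 hx).2
    linarith

end
end

section
/- Suppose (A,B) is a closed, weakly compact, convex, sharp proximinal pair of subsets of a Banach space X and T : A ∪ B → A ∪ B is a pointwise cyclic contraction with respect to orbits. Then T has a best proximity pair. -/
open Set Filter Topology

noncomputable section

variable {X : Type*} [NormedAddCommGroup X] [NormedSpace ℝ X]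

/-- `T` is a pointwise cyclic contraction with respect to orbits. -/
def PointwiseCyclicContractionOrbits (T : X → X) (A B : Set X) : Prop :=
  IsCyclicMap T A B ∧
  (∀ x ∈ A, ∀ y ∈ B, ‖x - y‖ = pairDist A B → ‖T x - T y‖ = pairDist A B) ∧
  (∀ x ∈ A, ∀ w ∈ B, ∃ a ∈ Set.Ioo (0 : ℝ) 1, ∃ b ∈ Set.Ioo (0 : ℝ) 1,
    (∀ y ∈ B, ‖T x - T y‖ ≤ a * ptDelta x (orbit2 T y) + (1 - a) * pairDist A B) ∧
    (∀ u ∈ A, ‖T w - T u‖ ≤ b * ptDelta w (orbit2 T u) + (1 - b) * pairDist A B))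

theorem aux_wc_bounded {A : Set X} (hA : WeaklyCompact A) : ∃ C, ∀ x ∈ A, ‖x‖ ≤ C := by
  have key : ∀ φ : StrongDual ℝ X, ∃ C, ∀ x : A,
      ‖(NormedSpace.inclusionInDoubleDual ℝ X (x : X)) φ‖ ≤ C := by
    intro φ
    have hφc : Continuous fun w : WeakSpace ℝ X => φ ((toWeakSpace ℝ X).symm w) :=
      WeakBilin.eval_continuous _ φ
    obtain ⟨C, hC⟩ := (hA.image hφc).isBounded.exists_norm_le
    refine ⟨C, fun x => ?_⟩
    have hmem : φ (x : X) ∈ (fun w : WeakSpace ℝ X => φ ((toWeakSpace ℝ X).symm w)) ''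
        (toWeakSpace ℝ X '' A) := ⟨toWeakSpace ℝ X (x : X), ⟨(x : X), x.2, rfl⟩, by simp⟩
    simpa using hC _ hmem
  obtain ⟨C', hC'⟩ := banach_steinhaus (g := fun x : A =>
    NormedSpace.inclusionInDoubleDual ℝ X (x : X)) key
  refine ⟨C', fun x hx => ?_⟩
  have h1 := hC' ⟨x, hx⟩
  have h2 : ‖NormedSpace.inclusionInDoubleDual ℝ X x‖ = ‖x‖ :=
    (NormedSpace.inclusionInDoubleDualLi ℝ (E := X)).norm_map x
  rw [← h2]; exact h1

theorem aux_wc_closed {s : Set X} (hcl : IsClosed s) (hcx : Convex ℝ s) :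
    IsClosed (toWeakSpace ℝ X '' s) := by
  have h := hcx.toWeakSpace_closure (𝕜 := ℝ)
  rw [hcl.closure_eq] at h
  rw [h]
  exact isClosed_closure


/-- On a nonempty closed weakly compact convex sharp proximinal pair of a
Banach space, every pointwise cyclic contraction with respect to orbits has a best
proximity pair. -/
theorem best_proximity_pair_of_pointwise_cyclic_contraction_orbits
    {X : Type*} [NormedAddCommGroup X] [NormedSpace ℝ X] [CompleteSpace X]
    (A B : Set X) (hAne : A.Nonempty) (hBne : B.Nonempty)
    (hAcl : IsClosed A) (hBcl : IsClosed B)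
    (hAw : WeaklyCompact A) (hBw : WeaklyCompact B)
    (hAc : Convex ℝ A) (hBc : Convex ℝ B)
    (hsharp : SharpProximinalPair A B)
    (T : X → X) (hT : PointwiseCyclicContractionOrbits T A B) :
    HasBestProximityPair T A B := by
  obtain ⟨hcyc, hiso, hcontr⟩ := hT
  have hT1 : MapsTo T A B := hcyc.1
  have hT2 : MapsTo T B A := hcyc.2
  -- basic facts about pairDist
  have hbdd : BddBelow {r : ℝ | ∃ x ∈ A, ∃ y ∈ B, r = ‖x - y‖} := by
    refine ⟨0, ?_⟩
    rintro r ⟨x, _, y, _, rfl⟩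
    positivity
  have hd0 : 0 ≤ pairDist A B := by
    apply Real.sInf_nonneg
    rintro r ⟨x, _, y, _, rfl⟩
    positivity
  have hdle : ∀ u ∈ A, ∀ v ∈ B, pairDist A B ≤ ‖u - v‖ := fun u hu v hv =>
    csInf_le hbdd ⟨u, hu, v, hv, rfl⟩
  -- the Zorn family
  set S : Set (Set X) :=
    {E | E ⊆ A ∧ E.Nonempty ∧ IsClosed E ∧ Convex ℝ E ∧ ∀ u ∈ E, T (T u) ∈ E} with hS
  have hAS : A ∈ S := ⟨subset_refl _, hAne, hAcl, hAc, fun u hu => hT2 (hT1 hu)⟩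
  obtain ⟨E₀, hE₀min⟩ : ∃ m, Minimal (· ∈ S) m := by
    apply zorn_superset
    intro c hcS hchain
    rcases c.eq_empty_or_nonempty with rfl | hcne
    · exact ⟨A, hAS, by simp⟩
    refine ⟨⋂₀ c, ⟨?_, ?_, ?_, ?_, ?_⟩, fun s hs => sInter_subset_of_mem hs⟩
    · obtain ⟨E, hE⟩ := hcne
      exact (sInter_subset_of_mem hE).trans (hcS hE).1
    · -- nonempty via weak compactness
      haveI : Nonempty c := hcne.to_subtype
      set F : c → Set (WeakSpace ℝ X) := fun E => toWeakSpace ℝ X '' (E : Set X) with hF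
      have hFcl : ∀ E : c, IsClosed (F E) := fun E =>
        aux_wc_closed ((hcS E.2).2.2.1) ((hcS E.2).2.2.2.1)
      have hFcpt : ∀ E : c, IsCompact (F E) := fun E =>
        hAw.of_isClosed_subset (hFcl E) (image_mono (hcS E.2).1)
      have hFne : ∀ E : c, (F E).Nonempty := fun E => ((hcS E.2).2.1).image _
      have hdir : Directed (· ⊇ ·) F := by
        intro i j
        rcases hchain.total i.2 j.2 with h | h
        · exact ⟨i, subset_refl _, image_mono h⟩
        · exact ⟨j, image_mono h, subset_refl _⟩
      have hne := IsCompact.nonempty_iInter_of_directed_nonempty_isCompact_isClosed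
        F hdir hFne hFcpt hFcl
      have himg : (⋂ E : c, F E) = toWeakSpace ℝ X '' (⋂ E : c, (E : Set X)) :=
        (Set.InjOn.image_iInter_eq ((toWeakSpace ℝ X).injective.injOn)).symm
      rw [himg] at hne
      rw [Set.sInter_eq_iInter]
      exact hne.of_image
    · exact isClosed_sInter fun E hE => (hcS hE).2.2.1
    · exact convex_sInter fun E hE => (hcS hE).2.2.2.1
    · intro u hu
      exact mem_sInter.2 fun E hE => (hcS hE).2.2.2.2 u (mem_sInter.1 hu E hE)
  obtain ⟨hE₀A, hE₀ne, hE₀cl, hE₀cx, hE₀inv⟩ := hE₀min.1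
  -- orbit membership
  have horb : ∀ u ∈ E₀, ∀ n : ℕ, T^[2 * n] u ∈ E₀ := by
    intro u hu n
    induction n with
    | zero => simpa using hu
    | succ n ih =>
      have heq : T^[2 * (n + 1)] u = T (T (T^[2 * n] u)) := by
        rw [show 2 * (n + 1) = (2 * n) + 1 + 1 by ring]
        rw [Function.iterate_succ_apply', Function.iterate_succ_apply']
      rw [heq]
      exact hE₀inv _ ih
  -- ptDelta bound helper
  have hptD : ∀ (z y : X) (ρ : ℝ), 0 ≤ ρ → (∀ n : ℕ, ‖z - T^[2 * n] y‖ ≤ ρ) →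
      ptDelta z (orbit2 T y) ≤ ρ := by
    intro z y ρ hρ h
    apply Real.sSup_le _ hρ
    rintro r ⟨s, ⟨n, rfl⟩, rfl⟩
    exact h n
  -- hull identity
  have hhull : closure (convexHull ℝ ((fun z => T (T z)) '' E₀)) = E₀ := by
    have hsubE : closure (convexHull ℝ ((fun z => T (T z)) '' E₀)) ⊆ E₀ := by
      apply closure_minimal _ hE₀cl
      apply convexHull_min _ hE₀cx
      rintro _ ⟨u, hu, rfl⟩
      exact hE₀inv u hu
    refine subset_antisymm hsubE (hE₀min.2 ⟨hsubE.trans hE₀A, ?_, isClosed_closure,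
      (convex_convexHull ℝ _).closure, ?_⟩ hsubE)
    · obtain ⟨u, hu⟩ := hE₀ne
      exact ⟨T (T u), subset_closure (subset_convexHull ℝ _ ⟨u, hu, rfl⟩)⟩
    · intro u hu
      exact subset_closure (subset_convexHull ℝ _ ⟨u, hsubE hu, rfl⟩)
  -- fix x and its constants
  obtain ⟨x, hx⟩ := hE₀ne
  have hxA : x ∈ A := hE₀A hx
  have hTx : T x ∈ B := hT1 hxA
  obtain ⟨a, ha, b, hb, hax, hbx⟩ := hcontr x hxA (T x) hTx
  set β := max a b with hβdef
  have hβ0 : 0 ≤ β := le_trans ha.1.le (le_max_left a b)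
  have hβ1 : β < 1 := max_lt ha.2 hb.2
  -- bounds
  obtain ⟨CA, hCA⟩ := aux_wc_bounded hAw
  obtain ⟨CB, hCB⟩ := aux_wc_bounded hBw
  set R := CA + CB with hRdef
  have hRd : pairDist A B ≤ R := by
    have h1 := hdle x hxA (T x) hTx
    have h2 : ‖x - T x‖ ≤ ‖x‖ + ‖T x‖ := norm_sub_le _ _
    have h3 := hCA x hxA
    have h4 := hCB (T x) hTx
    linarith
  -- the key contraction step via minimality
  have key : ∀ ρ : ℝ, pairDist A B ≤ ρ → (∀ u ∈ E₀, ∀ u' ∈ E₀, ‖u - T u'‖ ≤ ρ) →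
      ∀ u ∈ E₀, ∀ u' ∈ E₀, ‖u - T u'‖ ≤ β * ρ + (1 - β) * pairDist A B := by
    intro ρ hρd hQ
    set ρ' := β * ρ + (1 - β) * pairDist A B with hρ'def
    have hdρ' : pairDist A B ≤ ρ' := by nlinarith [hβ1.le]
    have hρ'0 : 0 ≤ ρ' := hd0.trans hdρ'
    have stepA : ∀ u ∈ E₀, (∀ u' ∈ E₀, ‖u - T u'‖ ≤ ρ') → ∀ w ∈ E₀, ‖T u - w‖ ≤ ρ' := by
      intro u hu hDB w hw
      have hball : E₀ ⊆ Metric.closedBall (T u) ρ' := by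
        have h1 : (fun z => T (T z)) '' E₀ ⊆ Metric.closedBall (T u) ρ' := by
          rintro _ ⟨u', hu', rfl⟩
          obtain ⟨a', ha', b', hb', hA', hB'⟩ := hcontr u (hE₀A hu) (T u) (hT1 (hE₀A hu))
          have hpt : ptDelta u (orbit2 T (T u')) ≤ ρ' := by
            apply hptD _ _ _ hρ'0
            intro n
            have heq : T^[2 * n] (T u') = T (T^[2 * n] u') := by
              rw [← Function.iterate_succ_apply, Function.iterate_succ_apply']
            rw [heq]
            exact hDB _ (horb u' hu' n)
          have h2 := hA' (T u') (hT1 (hE₀A hu'))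
          have h3 : ‖T u - T (T u')‖ ≤ ρ' := by
            nlinarith [ha'.1.le, ha'.2.le, hdρ', hpt,
              mul_nonneg ha'.1.le (sub_nonneg.2 hpt),
              mul_nonneg (sub_nonneg.2 ha'.2.le) (sub_nonneg.2 hdρ')]
          rw [Metric.mem_closedBall, dist_eq_norm, norm_sub_rev]
          exact h3
        calc E₀ = closure (convexHull ℝ ((fun z => T (T z)) '' E₀)) := hhull.symm
          _ ⊆ Metric.closedBall (T u) ρ' :=
            closure_minimal (convexHull_min h1 (convex_closedBall _ _)) Metric.isClosed_closedBall
      have h4 := hball hw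
      rw [Metric.mem_closedBall, dist_eq_norm] at h4
      rw [norm_sub_rev]
      exact h4
    have stepB : ∀ u ∈ E₀, (∀ w ∈ E₀, ‖T u - w‖ ≤ ρ') →
        ∀ u' ∈ E₀, ‖T (T u) - T u'‖ ≤ ρ' := by
      intro u hu hDA u' hu'
      obtain ⟨a', ha', b', hb', hA', hB'⟩ := hcontr u (hE₀A hu) (T u) (hT1 (hE₀A hu))
      have hpt : ptDelta (T u) (orbit2 T u') ≤ ρ' :=
        hptD _ _ _ hρ'0 (fun n => hDA _ (horb u' hu' n))
      have h2 := hB' u' (hE₀A hu')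
      nlinarith [hb'.1.le, hb'.2.le, hdρ', hpt,
        mul_nonneg hb'.1.le (sub_nonneg.2 hpt),
        mul_nonneg (sub_nonneg.2 hb'.2.le) (sub_nonneg.2 hdρ')]
    set Estar := {u | u ∈ E₀ ∧ ∀ u' ∈ E₀, ‖u - T u'‖ ≤ ρ'} with hEstardef
    have hsub : Estar ⊆ E₀ := fun u hu => hu.1
    have hEeq : Estar = E₀ ∩ ⋂ (u' : X) (_ : u' ∈ E₀), {u : X | ‖u - T u'‖ ≤ ρ'} := by
      ext u
      simp only [hEstardef, mem_setOf_eq, mem_inter_iff, mem_iInter]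
    have hmemS : Estar ∈ S := by
      refine ⟨hsub.trans hE₀A, ⟨T (T x), hE₀inv x hx, ?_⟩, ?_, ?_, ?_⟩
      · -- nonemptiness condition for T(T x)
        intro u' hu'
        have hpt : ptDelta (T x) (orbit2 T u') ≤ ρ := by
          apply hptD _ _ _ (hd0.trans hρd)
          intro n
          rw [norm_sub_rev]
          exact hQ _ (horb u' hu' n) x hx
        have h2 := hbx u' (hE₀A hu')
        have hbβ : b ≤ β := le_max_right a b
        nlinarith [hb.1.le, hb.2.le, hρd, hpt,
          mul_nonneg hb.1.le (sub_nonneg.2 hpt),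
          mul_nonneg (sub_nonneg.2 hbβ) (sub_nonneg.2 hρd)]
      · rw [hEeq]
        exact hE₀cl.inter (isClosed_iInter fun u' => isClosed_iInter fun _ =>
          isClosed_le ((continuous_id.sub continuous_const).norm) continuous_const)
      · rw [hEeq]
        apply hE₀cx.inter
        apply convex_iInter
        intro u'
        apply convex_iInter
        intro _
        have : {u : X | ‖u - T u'‖ ≤ ρ'} = Metric.closedBall (T u') ρ' := by
          ext z
          simp [Metric.mem_closedBall, dist_eq_norm]
        rw [this]
        exact convex_closedBall _ _
      · intro u hu
        exact ⟨hE₀inv u hu.1, stepB u hu.1 (stepA u hu.1 hu.2)⟩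
    have hEq : Estar = E₀ := subset_antisymm hsub (hE₀min.2 hmemS hsub)
    intro u hu u' hu'
    rw [← hEq] at hu
    exact hu.2 u' hu'
  -- iteration
  have main : ∀ n : ℕ, ∀ u ∈ E₀, ∀ u' ∈ E₀,
      ‖u - T u'‖ ≤ β ^ n * (R - pairDist A B) + pairDist A B := by
    intro n
    induction n with
    | zero =>
      intro u hu u' hu'
      have h1 : ‖u - T u'‖ ≤ ‖u‖ + ‖T u'‖ := norm_sub_le _ _
      have h2 := hCA u (hE₀A hu)
      have h3 := hCB (T u') (hT1 (hE₀A hu'))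
      simp only [pow_zero, one_mul]
      linarith
    | succ n ih =>
      have hρd : pairDist A B ≤ β ^ n * (R - pairDist A B) + pairDist A B := by
        nlinarith [pow_nonneg hβ0 n, hRd]
      have h := key _ hρd ih
      intro u hu u' hu'
      have h2 := h u hu u' hu'
      have heq : β * (β ^ n * (R - pairDist A B) + pairDist A B) + (1 - β) * pairDist A B
          = β ^ (n + 1) * (R - pairDist A B) + pairDist A B := by ring
      linarith [h2, heq.le]
  -- conclude
  have hle : ∀ n : ℕ, ‖x - T x‖ ≤ β ^ n * (R - pairDist A B) + pairDist A B :=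
    fun n => main n x hx x hx
  have htend : Tendsto (fun n : ℕ => β ^ n * (R - pairDist A B) + pairDist A B)
      atTop (𝓝 (pairDist A B)) := by
    have h1 : Tendsto (fun n : ℕ => β ^ n) atTop (𝓝 0) :=
      tendsto_pow_atTop_nhds_zero_of_lt_one hβ0 hβ1
    have h2 := (h1.mul_const (R - pairDist A B)).add_const (pairDist A B)
    simpa using h2
  have h1 : ‖x - T x‖ ≤ pairDist A B := ge_of_tendsto' htend hle
  have hxd : ‖x - T x‖ = pairDist A B := le_antisymm h1 (hdle x hxA (T x) hTx)
  have hTxd : ‖T x - T (T x)‖ = pairDist A B := hiso x hxA (T x) hTx hxd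
  exact ⟨x, T x, hxA, hTx, hxd, hTxd⟩


end
end

section
/- Let A = {x ∈ ℝ : −2 ≤ x ≤ −1}, B = {x ∈ ℝ : 1 ≤ x ≤ 2}, and define T on A ∪ B by T(x) = −x if x ∈ A and T(x) = −1 − x/2 if x ∈ B. Then d(A,B) = 2 and T has no best proximity pair: there is no (x,y) ∈ A × B with |x − Tx| = |y − Ty| = d(A,B). -/
open Set Filter Topology

noncomputable section

variable {X : Type*} [NormedAddCommGroup X] [NormedSpace ℝ X]

/-- For `A = [-2,-1]`, `B = [1,2]` and `T x = -x` on `A`,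
`T x = -1 - x/2` on `B`, we have `d(A,B) = 2` and `T` has no best proximity pair. -/
theorem example_no_best_proximity_pair
    (A B : Set ℝ) (hA : A = Set.Icc (-2 : ℝ) (-1)) (hB : B = Set.Icc (1 : ℝ) 2)
    (T : ℝ → ℝ) (hTA : ∀ x ∈ A, T x = -x) (hTB : ∀ x ∈ B, T x = -1 - x / 2) :
    pairDist A B = 2 ∧ ¬ HasBestProximityPair T A B := by
  subst hA hB
  have hd : pairDist (Set.Icc (-2 : ℝ) (-1)) (Set.Icc (1 : ℝ) 2) = 2 := by
    apply le_antisymm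
    · apply csInf_le
      · refine ⟨2, ?_⟩
        rintro r ⟨x, hx, y, hy, rfl⟩
        have h1 : x ≤ -1 := hx.2
        have h2 : (1 : ℝ) ≤ y := hy.1
        have : (2 : ℝ) ≤ y - x := by linarith
        calc (2 : ℝ) ≤ y - x := this
          _ ≤ |y - x| := le_abs_self _
          _ = ‖x - y‖ := by rw [Real.norm_eq_abs, abs_sub_comm]
      · exact ⟨-1, ⟨by norm_num, by norm_num⟩, 1, ⟨by norm_num, by norm_num⟩,
          by norm_num⟩
    · apply le_csInf
      · exact ⟨2, -1, ⟨by norm_num, by norm_num⟩, 1, ⟨by norm_num, by norm_num⟩,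
          by norm_num⟩
      · rintro r ⟨x, hx, y, hy, rfl⟩
        have h1 : x ≤ -1 := hx.2
        have h2 : (1 : ℝ) ≤ y := hy.1
        calc (2 : ℝ) ≤ y - x := by linarith
          _ ≤ |y - x| := le_abs_self _
          _ = ‖x - y‖ := by rw [Real.norm_eq_abs, abs_sub_comm]
  refine ⟨hd, ?_⟩
  rintro ⟨x, y, hx, hy, -, h2⟩
  rw [hd] at h2
  have hTy := hTB y hy
  have hy1 : (1 : ℝ) ≤ y := hy.1
  rw [hTy, Real.norm_eq_abs] at h2
  have : |y - (-1 - y / 2)| ≥ 5 / 2 := by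
    rw [abs_of_nonneg (by linarith)]; linarith
  linarith

end
end

section
/- Let A = {(0,x) ∈ ℝ² : 0 ≤ x ≤ 1}, B = {(1,y) ∈ ℝ² : 0 ≤ y ≤ 1} with the Euclidean norm, and define T : A ∪ B → A ∪ B by T(0,x) = (1, x/4) if x ≥ 1/2 and T(0,x) = (1, x/2) if x < 1/2, and T(1,y) = (0, y/4) if y ≥ 1/2 and T(1,y) = (0, y/2) if y < 1/2. Then T is relatively orbital nonexpansive but T is not relatively nonexpansive, i.e., there exist x ∈ A, y ∈ B with ‖Tx − Ty‖ > ‖x − y‖. -/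
open Set Filter Topology

noncomputable section

variable {X : Type*} [NormedAddCommGroup X] [NormedSpace ℝ X]


/-- The coordinate map of the cyclic map in the example. -/
def fOE (t : ℝ) : ℝ := if (1 : ℝ) / 2 ≤ t then t / 4 else t / 2

lemma fOE_nonneg {t : ℝ} (ht : 0 ≤ t) : 0 ≤ fOE t := by
  unfold fOE; split_ifs <;> linarith

lemma fOE_le_half {t : ℝ} (ht : 0 ≤ t) : fOE t ≤ t / 2 := by
  unfold fOE; split_ifs <;> linarith

lemma fOE_mem_Icc {t : ℝ} (ht : t ∈ Set.Icc (0:ℝ) 1) : fOE t ∈ Set.Icc (0:ℝ) 1 := by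
  obtain ⟨h0, h1⟩ := ht
  exact ⟨fOE_nonneg h0, le_trans (fOE_le_half h0) (by linarith)⟩

lemma fOE_iter_mem_Icc {t : ℝ} (ht : t ∈ Set.Icc (0:ℝ) 1) (n : ℕ) :
    fOE^[n] t ∈ Set.Icc (0:ℝ) 1 := by
  induction n with
  | zero => simpa using ht
  | succ n ih =>
    rw [Function.iterate_succ_apply']
    exact fOE_mem_Icc ih

lemma fOE_iter_nonneg {t : ℝ} (ht : 0 ≤ t) (n : ℕ) : 0 ≤ fOE^[n] t := by
  induction n with
  | zero => simpa
  | succ m ihm =>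
    rw [Function.iterate_succ_apply']
    exact fOE_nonneg ihm

lemma fOE_iter_le {t : ℝ} (ht : 0 ≤ t) (n : ℕ) : fOE^[n] t ≤ t / 2 ^ n := by
  induction n with
  | zero => simp
  | succ n ih =>
    rw [Function.iterate_succ_apply']
    have h0 : 0 ≤ fOE^[n] t := fOE_iter_nonneg ht n
    calc fOE (fOE^[n] t) ≤ fOE^[n] t / 2 := fOE_le_half h0
      _ ≤ (t / 2 ^ n) / 2 := by linarith
      _ = t / 2 ^ (n + 1) := by ring

lemma abs_fOE_sub_le {a b : ℝ} (ha : 0 ≤ a) (hb : 0 ≤ b) :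
    |fOE a - fOE b| ≤ max a b / 2 := by
  have h1 : fOE a ≤ max a b / 2 := le_trans (fOE_le_half ha) (by
    have := le_max_left a b; linarith)
  have h2 : fOE b ≤ max a b / 2 := le_trans (fOE_le_half hb) (by
    have := le_max_right a b; linarith)
  have h3 := fOE_nonneg ha
  have h4 := fOE_nonneg hb
  rw [abs_le]; constructor <;> linarith

/-- Key combinatorial lemma: the displacement after one step is dominated by the
displacement from some even iterate. -/
lemma fOE_key {a b : ℝ} (ha : a ∈ Set.Icc (0:ℝ) 1) (hb : b ∈ Set.Icc (0:ℝ) 1) :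
    ∃ n : ℕ, |fOE a - fOE b| ≤ |a - fOE^[2 * n] b| := by
  set M := max a b / 2 with hM
  have hle : |fOE a - fOE b| ≤ M := abs_fOE_sub_le ha.1 hb.1
  by_cases h : M ≤ |a - b|
  · exact ⟨0, by simpa using le_trans hle h⟩
  · push_neg at h
    -- in this case M < a
    have hMa : M < a := by
      rcases le_total b a with hba | hab
      · have hmax : max a b = a := max_eq_left hba
        rw [hM, hmax] at h ⊢
        rw [abs_of_nonneg (by linarith)] at h
        have ha0 : 0 < a := by
          by_contra hc
          push_neg at hc
          have : a = 0 := le_antisymm hc ha.1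
          rw [this] at h hba
          have hb0 : b = 0 := le_antisymm hba hb.1
          rw [hb0] at h
          simp at h
        linarith
      · have hmax : max a b = b := max_eq_right hab
        rw [hM, hmax] at h ⊢
        rw [abs_of_nonpos (by linarith)] at h
        linarith
    -- choose n with fOE^[2n] b < a - M
    have hpos : (0:ℝ) < a - M := by linarith
    obtain ⟨n, hn⟩ := exists_pow_lt_of_lt_one hpos (by norm_num : (1:ℝ)/2 < 1)
    refine ⟨n, ?_⟩
    have hc0 : 0 ≤ fOE^[2 * n] b := (fOE_iter_mem_Icc hb (2 * n)).1
    have hcb : fOE^[2 * n] b ≤ b / 2 ^ (2 * n) := fOE_iter_le hb.1 (2 * n)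
    have h2n : (1:ℝ) / 2 ^ (2 * n) ≤ (1/2) ^ n := by
      rw [div_pow, one_pow]
      apply div_le_div_of_nonneg_left (by norm_num) (by positivity)
      exact pow_le_pow_right₀ (by norm_num) (by omega)
    have hcsmall : fOE^[2 * n] b < a - M := by
      have hb1 : b ≤ 1 := hb.2
      have : b / 2 ^ (2 * n) ≤ 1 / 2 ^ (2 * n) := by
        apply div_le_div_of_nonneg_right hb1 (by positivity) |>.trans_eq rfl
      calc fOE^[2 * n] b ≤ b / 2 ^ (2 * n) := hcb
        _ ≤ 1 / 2 ^ (2 * n) := this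
        _ ≤ (1/2) ^ n := h2n
        _ < a - M := hn
    have : M ≤ a - fOE^[2 * n] b := by linarith
    calc |fOE a - fOE b| ≤ M := hle
      _ ≤ a - fOE^[2 * n] b := this
      _ ≤ |a - fOE^[2 * n] b| := le_abs_self _


/-- For `A = {0} × [0,1]`, `B = {1} × [0,1]` in the Euclidean plane and the
cyclic map `T` halving or quartering the second coordinate according to whether it is
below or above `1/2`, `T` is relatively orbital nonexpansive but not relatively
nonexpansive. -/
theorem example_rel_orbital_nonexpansive_not_rel_nonexpansive
    (A B : Set (EuclideanSpace ℝ (Fin 2)))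
    (hA : A = {p : EuclideanSpace ℝ (Fin 2) | p 0 = 0 ∧ p 1 ∈ Set.Icc (0 : ℝ) 1})
    (hB : B = {p : EuclideanSpace ℝ (Fin 2) | p 0 = 1 ∧ p 1 ∈ Set.Icc (0 : ℝ) 1})
    (T : EuclideanSpace ℝ (Fin 2) → EuclideanSpace ℝ (Fin 2))
    (hTA : ∀ p ∈ A, T p = if (1 : ℝ) / 2 ≤ p 1
      then (WithLp.equiv 2 (Fin 2 → ℝ)).symm ![1, p 1 / 4]
      else (WithLp.equiv 2 (Fin 2 → ℝ)).symm ![1, p 1 / 2])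
    (hTB : ∀ p ∈ B, T p = if (1 : ℝ) / 2 ≤ p 1
      then (WithLp.equiv 2 (Fin 2 → ℝ)).symm ![0, p 1 / 4]
      else (WithLp.equiv 2 (Fin 2 → ℝ)).symm ![0, p 1 / 2]) :
    RelOrbitalNonexpansive T A B ∧ ∃ x ∈ A, ∃ y ∈ B, ‖x - y‖ < ‖T x - T y‖ := by
  subst hA hB
  -- coordinate abbreviation
  have hnorm : ∀ p q : EuclideanSpace ℝ (Fin 2),
      ‖p - q‖ = Real.sqrt ((p 0 - q 0)^2 + (p 1 - q 1)^2) := by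
    intro p q
    rw [EuclideanSpace.norm_eq]
    simp [Fin.sum_univ_two, sq_abs]
  have hmemA : ∀ p : EuclideanSpace ℝ (Fin 2),
      p ∈ {p : EuclideanSpace ℝ (Fin 2) | p 0 = 0 ∧ p 1 ∈ Set.Icc (0 : ℝ) 1} ↔
        p 0 = 0 ∧ p 1 ∈ Set.Icc (0 : ℝ) 1 := fun _ => Iff.rfl
  have hmemB : ∀ p : EuclideanSpace ℝ (Fin 2),
      p ∈ {p : EuclideanSpace ℝ (Fin 2) | p 0 = 1 ∧ p 1 ∈ Set.Icc (0 : ℝ) 1} ↔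
        p 0 = 1 ∧ p 1 ∈ Set.Icc (0 : ℝ) 1 := fun _ => Iff.rfl
  set A : Set (EuclideanSpace ℝ (Fin 2)) :=
    {p : EuclideanSpace ℝ (Fin 2) | p 0 = 0 ∧ p 1 ∈ Set.Icc (0 : ℝ) 1} with hA
  set B : Set (EuclideanSpace ℝ (Fin 2)) :=
    {p : EuclideanSpace ℝ (Fin 2) | p 0 = 1 ∧ p 1 ∈ Set.Icc (0 : ℝ) 1} with hB
  -- coordinates of T
  have hTA' : ∀ p ∈ A, T p 0 = 1 ∧ T p 1 = fOE (p 1) := by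
    intro p hp
    rw [hTA p hp]
    unfold fOE
    split_ifs <;> exact ⟨rfl, rfl⟩
  have hTB' : ∀ p ∈ B, T p 0 = 0 ∧ T p 1 = fOE (p 1) := by
    intro p hp
    rw [hTB p hp]
    unfold fOE
    split_ifs <;> exact ⟨rfl, rfl⟩
  have hTAmem : ∀ p ∈ A, T p ∈ B := by
    intro p hp
    exact ⟨(hTA' p hp).1, by rw [(hTA' p hp).2]; exact fOE_mem_Icc hp.2⟩
  have hTBmem : ∀ p ∈ B, T p ∈ A := by
    intro p hp
    exact ⟨(hTB' p hp).1, by rw [(hTB' p hp).2]; exact fOE_mem_Icc hp.2⟩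
  -- even orbits
  have horbB : ∀ y ∈ B, ∀ n : ℕ, T^[2*n] y ∈ B ∧ (T^[2*n] y) 1 = fOE^[2*n] (y 1) := by
    intro y hy n
    induction n with
    | zero => simpa using hy
    | succ n ih =>
      have h2 : 2 * (n + 1) = 2 * n + 1 + 1 := by ring
      rw [h2, Function.iterate_succ_apply', Function.iterate_succ_apply',
        Function.iterate_succ_apply', Function.iterate_succ_apply']
      obtain ⟨ihmem, ihcoord⟩ := ih
      have h3 := hTBmem _ ihmem
      have h4 := hTAmem _ h3
      refine ⟨h4, ?_⟩
      rw [(hTA' _ h3).2, (hTB' _ ihmem).2, ihcoord]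
  have horbA : ∀ x ∈ A, ∀ n : ℕ, T^[2*n] x ∈ A ∧ (T^[2*n] x) 1 = fOE^[2*n] (x 1) := by
    intro x hx n
    induction n with
    | zero => simpa using hx
    | succ n ih =>
      have h2 : 2 * (n + 1) = 2 * n + 1 + 1 := by ring
      rw [h2, Function.iterate_succ_apply', Function.iterate_succ_apply',
        Function.iterate_succ_apply', Function.iterate_succ_apply']
      obtain ⟨ihmem, ihcoord⟩ := ih
      have h3 := hTAmem _ ihmem
      have h4 := hTBmem _ h3
      refine ⟨h4, ?_⟩
      rw [(hTB' _ h3).2, (hTA' _ ihmem).2, ihcoord]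
  -- the two distinguished points realizing the distance
  have hx0 : ((WithLp.equiv 2 (Fin 2 → ℝ)).symm ![(0:ℝ), 0]) ∈ A := by
    refine ⟨rfl, ?_⟩
    show (0:ℝ) ∈ Set.Icc (0:ℝ) 1
    constructor <;> norm_num
  have hy0 : ((WithLp.equiv 2 (Fin 2 → ℝ)).symm ![(1:ℝ), 0]) ∈ B := by
    refine ⟨rfl, ?_⟩
    show (0:ℝ) ∈ Set.Icc (0:ℝ) 1
    constructor <;> norm_num
  have hmem1 : (1:ℝ) ∈ {r | ∃ x ∈ A, ∃ y ∈ B, r = ‖x - y‖} := by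
    refine ⟨_, hx0, _, hy0, ?_⟩
    rw [hnorm]
    show (1:ℝ) = Real.sqrt (((0:ℝ) - 1)^2 + ((0:ℝ) - 0)^2)
    rw [show ((0:ℝ) - 1)^2 + ((0:ℝ) - 0)^2 = 1 by norm_num, Real.sqrt_one]
  have hlb : ∀ r ∈ {r | ∃ x ∈ A, ∃ y ∈ B, r = ‖x - y‖}, (1:ℝ) ≤ r := by
    rintro r ⟨x, hx, y, hy, rfl⟩
    rw [hnorm, hx.1, hy.1]
    rw [show ((0:ℝ) - 1)^2 = 1 by norm_num]
    calc (1:ℝ) = Real.sqrt 1 := Real.sqrt_one.symm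
      _ ≤ _ := Real.sqrt_le_sqrt (by nlinarith [sq_nonneg (x 1 - y 1)])
  have hpd : pairDist A B = 1 := by
    unfold pairDist
    exact le_antisymm (csInf_le ⟨1, hlb⟩ hmem1) (le_csInf ⟨1, hmem1⟩ hlb)
  -- norm of T x - T y
  have hTnorm : ∀ x ∈ A, ∀ y ∈ B,
      ‖T x - T y‖ = Real.sqrt (1 + (fOE (x 1) - fOE (y 1))^2) := by
    intro x hx y hy
    rw [hnorm, (hTA' x hx).1, (hTA' x hx).2, (hTB' y hy).1, (hTB' y hy).2]
    norm_num
  -- bound for sqrt expressions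
  have hsqrt_le : ∀ u v : ℝ, |u| ≤ |v| →
      Real.sqrt (1 + u^2) ≤ Real.sqrt (1 + v^2) := by
    intro u v huv
    apply Real.sqrt_le_sqrt
    have h1 : |u|^2 ≤ |v|^2 := pow_le_pow_left₀ (abs_nonneg _) huv 2
    rw [sq_abs, sq_abs] at h1
    linarith
  constructor
  · refine ⟨⟨hTAmem, hTBmem⟩, ?_, ?_⟩
    · -- proximal pairs map to proximal pairs
      intro x hx y hy h
      rw [hpd] at h ⊢
      rw [hnorm, hx.1, hy.1] at h
      rw [show ((0:ℝ) - 1)^2 = 1 by norm_num] at h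
      have h2 : 1 + (x 1 - y 1)^2 = 1 := Real.sqrt_eq_one.mp h
      have h3 : x 1 = y 1 := by nlinarith [sq_nonneg (x 1 - y 1)]
      rw [hTnorm x hx y hy, h3, sub_self]
      norm_num
    · -- the orbital nonexpansiveness inequality
      intro x hx y hy
      rw [hTnorm x hx y hy]
      apply le_min
      · -- bound by ptDelta x (orbit2 T y)
        obtain ⟨n, hn⟩ := fOE_key hx.2 hy.2
        have hbdd : BddAbove {r | ∃ s ∈ orbit2 T y, r = ‖x - s‖} := by
          refine ⟨2, ?_⟩
          rintro r ⟨s, hs, rfl⟩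
          obtain ⟨m, hm⟩ := hs
          have hm' : T^[2*m] y = s := hm
          rw [← hm']
          obtain ⟨hsB, _⟩ := horbB y hy m
          rw [hnorm, hx.1, hsB.1]
          have hb1 := hx.2
          have hb2 := hsB.2
          calc Real.sqrt ((0 - 1)^2 + (x 1 - (T^[2*m] y) 1)^2)
              ≤ Real.sqrt 4 := Real.sqrt_le_sqrt (by
                obtain ⟨u1, u2⟩ := hb1; obtain ⟨v1, v2⟩ := hb2; nlinarith)
            _ = 2 := by
                rw [show (4:ℝ) = 2^2 by norm_num, Real.sqrt_sq (by norm_num)]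
        have hel : ‖x - T^[2*n] y‖ ∈ {r | ∃ s ∈ orbit2 T y, r = ‖x - s‖} :=
          ⟨T^[2*n] y, ⟨n, rfl⟩, rfl⟩
        have heq : ‖x - T^[2*n] y‖
            = Real.sqrt (1 + (x 1 - fOE^[2*n] (y 1))^2) := by
          obtain ⟨hsB, hsc⟩ := horbB y hy n
          rw [hnorm, hx.1, hsB.1, hsc]
          norm_num
        calc Real.sqrt (1 + (fOE (x 1) - fOE (y 1))^2)
            ≤ Real.sqrt (1 + (x 1 - fOE^[2*n] (y 1))^2) := hsqrt_le _ _ hn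
          _ = ‖x - T^[2*n] y‖ := heq.symm
          _ ≤ ptDelta x (orbit2 T y) := le_csSup hbdd hel
      · -- bound by ptDelta y (orbit2 T x)
        obtain ⟨n, hn⟩ := fOE_key hy.2 hx.2
        have hbdd : BddAbove {r | ∃ s ∈ orbit2 T x, r = ‖y - s‖} := by
          refine ⟨2, ?_⟩
          rintro r ⟨s, hs, rfl⟩
          obtain ⟨m, hm⟩ := hs
          have hm' : T^[2*m] x = s := hm
          rw [← hm']
          obtain ⟨hsA, _⟩ := horbA x hx m
          rw [hnorm, hy.1, hsA.1]
          have hb1 := hy.2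
          have hb2 := hsA.2
          calc Real.sqrt ((1 - 0)^2 + (y 1 - (T^[2*m] x) 1)^2)
              ≤ Real.sqrt 4 := Real.sqrt_le_sqrt (by
                obtain ⟨u1, u2⟩ := hb1; obtain ⟨v1, v2⟩ := hb2; nlinarith)
            _ = 2 := by
                rw [show (4:ℝ) = 2^2 by norm_num, Real.sqrt_sq (by norm_num)]
        have hel : ‖y - T^[2*n] x‖ ∈ {r | ∃ s ∈ orbit2 T x, r = ‖y - s‖} :=
          ⟨T^[2*n] x, ⟨n, rfl⟩, rfl⟩
        have heq : ‖y - T^[2*n] x‖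
            = Real.sqrt (1 + (y 1 - fOE^[2*n] (x 1))^2) := by
          obtain ⟨hsA, hsc⟩ := horbA x hx n
          rw [hnorm, hy.1, hsA.1, hsc]
          norm_num
        have habs : |fOE (x 1) - fOE (y 1)| ≤ |y 1 - fOE^[2*n] (x 1)| := by
          rw [abs_sub_comm]; exact hn
        calc Real.sqrt (1 + (fOE (x 1) - fOE (y 1))^2)
            ≤ Real.sqrt (1 + (y 1 - fOE^[2*n] (x 1))^2) := hsqrt_le _ _ habs
          _ = ‖y - T^[2*n] x‖ := heq.symm
          _ ≤ ptDelta y (orbit2 T x) := le_csSup hbdd hel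
  · -- not relatively nonexpansive
    refine ⟨(WithLp.equiv 2 (Fin 2 → ℝ)).symm ![(0:ℝ), 9/20], ?_,
      (WithLp.equiv 2 (Fin 2 → ℝ)).symm ![(1:ℝ), 1/2], ?_, ?_⟩
    · refine ⟨rfl, ?_⟩
      show (9/20:ℝ) ∈ Set.Icc (0:ℝ) 1
      constructor <;> norm_num
    · refine ⟨rfl, ?_⟩
      show (1/2:ℝ) ∈ Set.Icc (0:ℝ) 1
      constructor <;> norm_num
    · have hxm : ((WithLp.equiv 2 (Fin 2 → ℝ)).symm ![(0:ℝ), 9/20]) ∈ A := by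
        refine ⟨rfl, ?_⟩
        show (9/20:ℝ) ∈ Set.Icc (0:ℝ) 1
        constructor <;> norm_num
      have hym : ((WithLp.equiv 2 (Fin 2 → ℝ)).symm ![(1:ℝ), 1/2]) ∈ B := by
        refine ⟨rfl, ?_⟩
        show (1/2:ℝ) ∈ Set.Icc (0:ℝ) 1
        constructor <;> norm_num
      rw [hTnorm _ hxm _ hym, hnorm]
      show Real.sqrt (((0:ℝ) - 1)^2 + ((9/20:ℝ) - 1/2)^2)
        < Real.sqrt (1 + (fOE (9/20) - fOE (1/2))^2)
      have hf1 : fOE ((9:ℝ)/20) = 9/40 := by unfold fOE; norm_num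
      have hf2 : fOE ((1:ℝ)/2) = 1/8 := by unfold fOE; norm_num
      rw [hf1, hf2]
      apply Real.sqrt_lt_sqrt (by positivity)
      norm_num

end
end

section
/- Let (A,B) be a bounded pair of subsets of a Banach space X and let ({x_n},{y_n}) be a proximinal diametral sequence in (A,B). Set H = closed convex hull of {x_n : n ∈ ℕ} and K = closed convex hull of {y_n : n ∈ ℕ}. Then δ(H,K) = δ({x_n},{y_n}), and for every z ∈ K, lim_{n→∞} ‖x_n − z‖ = δ(H,K), and for every v ∈ H, lim_{n→∞} ‖y_n − v‖ = δ(H,K). -/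
open Set Filter Topology

noncomputable section

variable {X : Type*} [NormedAddCommGroup X] [NormedSpace ℝ X]

/-- `δ({x_n},{y_n}) = sup {‖x_m - y_n‖ : m, n ∈ ℕ}` -/
def seqDelta (x y : ℕ → X) : ℝ := sSup {r | ∃ m n, r = ‖x m - y n‖}

/-- `({x_n},{y_n})` is a proximinal diametral sequence in `(A,B)`. -/
def ProximinalDiametralSeq (A B : Set X) (x y : ℕ → X) : Prop :=
  (∀ n, x n ∈ A) ∧ (∀ n, y n ∈ B) ∧
  ¬ (∃ a b, (∀ n, x n = a) ∧ (∀ n, y n = b)) ∧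
  (∀ n, ‖x n - y n‖ = pairDist A B) ∧
  Tendsto (fun n => Metric.infDist (x (n + 1)) (convexHull ℝ (y '' Set.Iic n)))
    atTop (𝓝 (seqDelta x y)) ∧
  Tendsto (fun n => Metric.infDist (y (n + 1)) (convexHull ℝ (x '' Set.Iic n)))
    atTop (𝓝 (seqDelta x y))


/-- Auxiliary: a point of the convex hull of a range lies in the convex hull of a
finite initial segment. -/
lemma aux_mem_convexHull_Iic {X : Type*} [NormedAddCommGroup X] [NormedSpace ℝ X]
    (v : ℕ → X) {z : X} (hz : z ∈ convexHull ℝ (Set.range v)) :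
    ∃ N, z ∈ convexHull ℝ (v '' Set.Iic N) := by
  rw [convexHull_eq_union_convexHull_finite_subsets] at hz
  simp only [Set.mem_iUnion] at hz
  obtain ⟨t, hts, hzt⟩ := hz
  choose f hf using fun a (ha : a ∈ t) => hts ha
  refine ⟨t.attach.sup fun a => f a.1 a.2, convexHull_mono ?_ hzt⟩
  intro a ha
  exact ⟨f a ha, Finset.le_sup (f := fun a : {x // x ∈ t} => f a.1 a.2)
    (Finset.mem_attach t ⟨a, ha⟩), hf a ha⟩

lemma aux_tendsto {X : Type*} [NormedAddCommGroup X] [NormedSpace ℝ X]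
    (u v : ℕ → X) (δ : ℝ)
    (hub : ∀ n, ∀ z ∈ closure (convexHull ℝ (Set.range v)), ‖u n - z‖ ≤ δ)
    (hinf : Tendsto (fun n => Metric.infDist (u (n + 1)) (convexHull ℝ (v '' Set.Iic n)))
      atTop (𝓝 δ))
    {z : X} (hz : z ∈ closure (convexHull ℝ (Set.range v))) :
    Tendsto (fun n => ‖u n - z‖) atTop (𝓝 δ) := by
  rw [Metric.tendsto_atTop]
  intro ε hε
  obtain ⟨z', hz', hzz'⟩ := Metric.mem_closure_iff.mp hz (ε / 4) (by positivity)
  obtain ⟨N, hN⟩ := aux_mem_convexHull_Iic v hz'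
  obtain ⟨M, hM⟩ := Metric.tendsto_atTop.mp hinf (ε / 4) (by positivity)
  refine ⟨max N M + 1, fun n hn => ?_⟩
  obtain ⟨m, rfl⟩ : ∃ m, n = m + 1 := ⟨n - 1, by omega⟩
  have hmN : N ≤ m := by omega
  have hmM : M ≤ m := by omega
  have h1 : Metric.infDist (u (m + 1)) (convexHull ℝ (v '' Set.Iic m)) ≤ ‖u (m + 1) - z'‖ := by
    rw [← dist_eq_norm]
    exact Metric.infDist_le_dist_of_mem
      (convexHull_mono (Set.image_mono (Set.Iic_subset_Iic.mpr hmN)) hN)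
  have h2 := hM m hmM
  rw [Real.dist_eq, abs_lt] at h2
  have h3 : ‖u (m + 1) - z‖ ≤ δ := hub _ _ hz
  have h4 : ‖u (m + 1) - z'‖ ≤ ‖u (m + 1) - z‖ + ‖z - z'‖ := norm_sub_le_norm_sub_add_norm_sub _ _ _
  rw [dist_eq_norm] at hzz'
  rw [Real.dist_eq, abs_lt]
  constructor <;> linarith

/-- If `({x_n},{y_n})` is a proximinal diametral sequence in a bounded
pair `(A,B)` and `H`, `K` are the closed convex hulls of the sequences, then
`δ(H,K) = δ({x_n},{y_n})`, and `‖x_n - z‖ → δ(H,K)` for all `z ∈ K`, and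
`‖y_n - v‖ → δ(H,K)` for all `v ∈ H`. -/
theorem diametral_seq_closed_convex_hulls
    {X : Type*} [NormedAddCommGroup X] [NormedSpace ℝ X] [CompleteSpace X]
    (A B : Set X) (hAb : Bornology.IsBounded A) (hBb : Bornology.IsBounded B)
    (x y : ℕ → X) (hdiam : ProximinalDiametralSeq A B x y)
    (H K : Set X) (hH : H = closure (convexHull ℝ (Set.range x)))
    (hK : K = closure (convexHull ℝ (Set.range y))) :
    pairDelta H K = seqDelta x y ∧
    (∀ z ∈ K, Tendsto (fun n => ‖x n - z‖) atTop (𝓝 (pairDelta H K))) ∧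
    (∀ v ∈ H, Tendsto (fun n => ‖y n - v‖) atTop (𝓝 (pairDelta H K))) := by
  obtain ⟨hxA, hyB, -, -, hx_inf, hy_inf⟩ := hdiam
  set δ := seqDelta x y with hδdef
  obtain ⟨C, hC⟩ := (hAb.union hBb).subset_closedBall 0
  have hbdd : BddAbove {r | ∃ m n, r = ‖x m - y n‖} := by
    refine ⟨2 * C, ?_⟩
    rintro r ⟨m, n, rfl⟩
    have h1 : ‖x m‖ ≤ C := by
      simpa using hC (Set.mem_union_left _ (hxA m))
    have h2 : ‖y n‖ ≤ C := by
      simpa using hC (Set.mem_union_right _ (hyB n))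
    calc ‖x m - y n‖ ≤ ‖x m‖ + ‖y n‖ := norm_sub_le _ _
      _ ≤ 2 * C := by linarith
  have hle : ∀ m n, ‖x m - y n‖ ≤ δ := fun m n => le_csSup hbdd ⟨m, n, rfl⟩
  have hδ0 : (0 : ℝ) ≤ δ := (norm_nonneg _).trans (hle 0 0)
  have hxH : ∀ m, x m ∈ H := fun m =>
    hH ▸ subset_closure (subset_convexHull ℝ _ (Set.mem_range_self m))
  have hyK : ∀ n, y n ∈ K := fun n =>
    hK ▸ subset_closure (subset_convexHull ℝ _ (Set.mem_range_self n))
  have hHy : ∀ n, ∀ p ∈ H, ‖p - y n‖ ≤ δ := by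
    intro n p hp
    have : H ⊆ Metric.closedBall (y n) δ := by
      rw [hH]
      refine closure_minimal (convexHull_min ?_ (convex_closedBall _ _)) Metric.isClosed_closedBall
      rintro - ⟨m, rfl⟩
      simpa [Metric.mem_closedBall, dist_eq_norm] using hle m n
    simpa [Metric.mem_closedBall, dist_eq_norm] using this hp
  have hHK : ∀ p ∈ H, ∀ q ∈ K, ‖p - q‖ ≤ δ := by
    intro p hp q hq
    have : K ⊆ Metric.closedBall p δ := by
      rw [hK]
      refine closure_minimal (convexHull_min ?_ (convex_closedBall _ _)) Metric.isClosed_closedBall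
      rintro - ⟨n, rfl⟩
      rw [Metric.mem_closedBall, dist_eq_norm, norm_sub_rev]
      exact hHy n p hp
    have := this hq
    rw [Metric.mem_closedBall, dist_comm, dist_eq_norm] at this
    exact this
  have hbdd2 : BddAbove {r | ∃ p ∈ H, ∃ q ∈ K, r = ‖p - q‖} := by
    refine ⟨δ, ?_⟩
    rintro r ⟨p, hp, q, hq, rfl⟩
    exact hHK p hp q hq
  have hmain : pairDelta H K = δ := by
    apply le_antisymm
    · refine Real.sSup_le ?_ hδ0
      rintro r ⟨p, hp, q, hq, rfl⟩
      exact hHK p hp q hq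
    · refine Real.sSup_le ?_ ?_
      · rintro r ⟨m, n, rfl⟩
        exact le_csSup hbdd2 ⟨x m, hxH m, y n, hyK n, rfl⟩
      · exact (norm_nonneg (x 0 - y 0)).trans
          (le_csSup hbdd2 ⟨x 0, hxH 0, y 0, hyK 0, rfl⟩)
  refine ⟨hmain, ?_, ?_⟩
  · intro z hz
    rw [hmain]
    exact aux_tendsto x y δ (fun n z hz => hHK _ (hxH n) z (hK ▸ hz)) hx_inf (hK ▸ hz)
  · intro v hv
    rw [hmain]
    refine aux_tendsto y x δ (fun n p hp => ?_) hy_inf (hH ▸ hv)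
    rw [norm_sub_rev]
    exact hHK _ (hH ▸ hp) _ (hyK n)


end
end
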